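/- arXiv:2410.12134 — 5 statements merged into one kernel-verified Lean document; each statement's English description precedes it below -/
import Mathlib

section
/- Assume ℓ_{ij} ≤ b+h for all i, j ∈ X. Then for every q ∈ ℝ_+^X and d ∈ ℝ_+^X there exists an optimal solution x of the linear program defining C(q,d) that fulfills all the demand or consumes all of the inventory, i.e., either Σ_{i,j∈X} x_{ij} = Σ_{j∈X} d_j or Σ_{i,j∈X} x_{ij} = Σ_{i∈X} q_i. -/
open MeasureTheory

section Base

variable {X : Type} [Fintype X]

/-- `ℓ` is a metric on the finite set `X`. -/
structure IsMetric (ℓ : X → X → ℝ) : Prop where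
  refl : ∀ i, ℓ i i = 0
  pos : ∀ i j, i ≠ j → 0 < ℓ i j
  symm : ∀ i j, ℓ i j = ℓ j i
  triangle : ∀ i j k, ℓ i k ≤ ℓ i j + ℓ j k

/-- The cost `C(q, d)`: the optimal value of the fulfillment LP. -/
noncomputable def cost (ℓ : X → X → ℝ) (b h : ℝ) (q d : X → ℝ) : ℝ :=
  sInf { v | ∃ x : X → X → ℝ, (∀ i j, 0 ≤ x i j) ∧
    (∀ i, ∑ j, x i j ≤ q i) ∧ (∀ j, ∑ i, x i j ≤ d j) ∧
    v = h * ∑ i, (q i - ∑ j, x i j) + b * ∑ j, (d j - ∑ i, x i j)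
        + ∑ i, ∑ j, ℓ i j * x i j }

/-- Membership in the ambiguity set `F(μ, Σ)` where `Σ = diag (σ_i ^ 2)`:
probability distributions supported on the nonnegative orthant, with mean `μ`
and (diagonal) covariance matrix `diag (σ_i ^ 2)`. -/
def memF (μ σ : X → ℝ) (D : Measure (X → ℝ)) : Prop :=
  IsProbabilityMeasure D ∧
  (∀ᵐ d ∂D, ∀ i, 0 ≤ d i) ∧
  (∀ i, Integrable (fun d => d i) D ∧ ∫ d, d i ∂D = μ i) ∧
  (∀ i j, Integrable (fun d => (d i - μ i) * (d j - μ j)) D) ∧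
  (∀ i, ∫ d, (d i - μ i) ^ 2 ∂D = (σ i) ^ 2) ∧
  (∀ i j, i ≠ j → ∫ d, (d i - μ i) * (d j - μ j) ∂D = 0)

/-- The worst-case expected cost of the inventory vector `q`. -/
noncomputable def worstExp (ℓ : X → X → ℝ) (b h : ℝ) (μ σ : X → ℝ) (q : X → ℝ) : ℝ :=
  sSup { v | ∃ D : Measure (X → ℝ), memF μ σ D ∧ v = ∫ d, cost ℓ b h q d ∂D }

/-- The optimal value `z_ODRNM` of the offline problem. -/
noncomputable def zODRNM (ℓ : X → X → ℝ) (b h : ℝ) (μ σ : X → ℝ) : ℝ :=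
  sInf { v | ∃ q : X → ℝ, (∀ i, 0 ≤ q i) ∧ v = worstExp ℓ b h μ σ q }

/-- Distance between two clusters. -/
noncomputable def setDist (ℓ : X → X → ℝ) (C C' : Finset X) : ℝ :=
  sInf { v | ∃ i ∈ C, ∃ j ∈ C', v = ℓ i j }

/-- Diameter of a cluster. -/
noncomputable def fdiam (ℓ : X → X → ℝ) (C : Finset X) : ℝ :=
  sSup { v | ∃ i ∈ C, ∃ j ∈ C, v = ℓ i j }

/-- `P` is an `(α, β)`-well-separated partition of `(X, ℓ)` of margin `Δ`:
at most `β` families of clusters, such that clusters within a family are at pairwise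
distance more than `Δ`, every cluster has diameter less than `α·Δ`, and the set of all
clusters forms a partition of `X`. -/
def IsWSP (ℓ : X → X → ℝ) (α β Δ : ℝ) (P : Finset (Finset (Finset X))) : Prop :=
  ((P.card : ℝ) ≤ β) ∧
  (∀ F ∈ P, ∀ C ∈ F, ∀ C' ∈ F, C ≠ C' → Δ < setDist ℓ C C') ∧
  (∀ F ∈ P, ∀ C ∈ F, fdiam ℓ C < α * Δ) ∧
  (∀ x : X, ∃! C : Finset X, (∃ F ∈ P, C ∈ F) ∧ x ∈ C)

/-- Minimum pairwise distance of the metric space. -/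
noncomputable def minD (ℓ : X → X → ℝ) : ℝ := sInf { v | ∃ i j : X, i ≠ j ∧ v = ℓ i j }

/-- Maximum pairwise distance of the metric space. -/
noncomputable def maxD (ℓ : X → X → ℝ) : ℝ := sSup { v | ∃ i j : X, i ≠ j ∧ v = ℓ i j }

/-- The margin `Δ₁` of the first level. -/
noncomputable def delta1 (ℓ : X → X → ℝ) (α : ℝ) : ℝ :=
  (1 / α) * max (minD ℓ) (maxD ℓ / (Fintype.card X : ℝ))

/-- The number of levels `R = ⌈log (max_{i≠j} ℓ i j / Δ₁) / log γ⌉ + 1`. -/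
noncomputable def numLevels (ℓ : X → X → ℝ) (α γ : ℝ) : ℕ :=
  ⌈Real.log (maxD ℓ / delta1 ℓ α) / Real.log γ⌉₊ + 1

/-- `P 0, …, P (R - 1)` (with `R = numLevels ℓ α γ`) is an `(α, β, γ)`-well-separated
hierarchical partition of `(X, ℓ)`: level `r` is an `(α, β)`-well-separated partition of
margin `Δ_{r+1} = γ ^ r * Δ₁`, and each level coarsens the previous one. -/
def IsWSHP (ℓ : X → X → ℝ) (α β γ : ℝ) (P : ℕ → Finset (Finset (Finset X))) : Prop :=
  (∀ r < numLevels ℓ α γ, IsWSP ℓ α β (γ ^ r * delta1 ℓ α) (P r)) ∧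
  (∀ r, r + 1 < numLevels ℓ α γ →
    ∀ F ∈ P r, ∀ C ∈ F, ∃ F' ∈ P (r + 1), ∃ C' ∈ F', C ⊆ C')

/-- The set of all clusters of a well-separated partition. -/
def clustersOf [DecidableEq X] (P : Finset (Finset (Finset X))) : Finset (Finset X) :=
  P.biUnion id

/-- `diam_p C`: the diameter of the (unique) cluster of the next-level partition `P'`
containing the cluster `C`. -/
noncomputable def parentDiam (ℓ : X → X → ℝ) (P' : Finset (Finset (Finset X)))
    (C : Finset X) : ℝ :=
  sSup { v | ∃ F ∈ P', ∃ C' ∈ F, C ⊆ C' ∧ v = fdiam ℓ C' }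

/-- The hierarchical cost `C^H(q, d)`. -/
noncomputable def CH [DecidableEq X] (ℓ : X → X → ℝ) (b h : ℝ) (R : ℕ)
    (P : ℕ → Finset (Finset (Finset X))) (q d : X → ℝ) : ℝ :=
  h * max ((∑ i, q i) - ∑ i, d i) 0 + b * max ((∑ i, d i) - ∑ i, q i) 0 +
  (∑ r ∈ Finset.range (R - 1), ∑ C ∈ clustersOf (P r),
      parentDiam ℓ (P (r + 1)) C * max ((∑ i ∈ C, d i) - ∑ i ∈ C, q i) 0) +
  fdiam ℓ Finset.univ / (Fintype.card X : ℝ) * ∑ i, max (d i - q i) 0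

/-- `σ_C = √(Σ_{i ∈ C} σ_i²)`. -/
noncomputable def sigC (σ : X → ℝ) (C : Finset X) : ℝ := Real.sqrt (∑ i ∈ C, (σ i) ^ 2)

/-- Feasibility for the GSM covering LP. -/
def GSMFeasible [DecidableEq X] (ℓ : X → X → ℝ) (b h : ℝ) (μ σ : X → ℝ) (R : ℕ)
    (P : ℕ → Finset (Finset (Finset X))) (q : X → ℝ) : Prop :=
  (∀ r, r + 1 < R → ∀ C ∈ clustersOf (P r), 2 * h ≤ parentDiam ℓ (P (r + 1)) C →
    sigC σ C / 2 * (Real.sqrt ((parentDiam ℓ (P (r + 1)) C - h) / h) -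
        Real.sqrt (h / (parentDiam ℓ (P (r + 1)) C - h)))
      ≤ (∑ i ∈ C, q i) - ∑ i ∈ C, μ i) ∧
  (∀ i, σ i / (∑ j, σ j) * (sigC σ Finset.univ / 2) *
      (Real.sqrt (b / h) - Real.sqrt (h / b)) ≤ q i - μ i)

/-- Optimality for the GSM covering LP (minimizing the total safety stock `h (q_X - μ_X)`). -/
def GSMOptimal [DecidableEq X] (ℓ : X → X → ℝ) (b h : ℝ) (μ σ : X → ℝ) (R : ℕ)
    (P : ℕ → Finset (Finset (Finset X))) (q : X → ℝ) : Prop :=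
  GSMFeasible ℓ b h μ σ R P q ∧
  ∀ q' : X → ℝ, GSMFeasible ℓ b h μ σ R P q' →
    h * ((∑ i, q i) - ∑ i, μ i) ≤ h * ((∑ i, q' i) - ∑ i, μ i)

/-- The transportation cost `Θ(u, v)` between two vectors of equal total mass. -/
noncomputable def transCost (ℓ : X → X → ℝ) (u v : X → ℝ) : ℝ :=
  sInf { c | ∃ x : X → X → ℝ, (∀ i j, 0 ≤ x i j) ∧
    (∀ i, ∑ j, x i j = u i) ∧ (∀ j, ∑ i, x i j = v j) ∧
    c = ∑ i, ∑ j, ℓ i j * x i j }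

end Base

/-- if `ℓ i j ≤ b + h` for all `i, j`, then for every `q, d ≥ 0` there is
an optimal solution of the LP defining `C(q, d)` that fulfills all the demand or consumes
all of the inventory. -/
theorem stmt1 {X : Type} [Fintype X] (ℓ : X → X → ℝ) (hℓ : IsMetric ℓ)
    (b h : ℝ) (hh : 0 < h) (hbh : h ≤ b) (hub : ∀ i j, ℓ i j ≤ b + h)
    (q d : X → ℝ) (hq : ∀ i, 0 ≤ q i) (hd : ∀ i, 0 ≤ d i) :
    ∃ x : X → X → ℝ, (∀ i j, 0 ≤ x i j) ∧
      (∀ i, ∑ j, x i j ≤ q i) ∧ (∀ j, ∑ i, x i j ≤ d j) ∧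
      (h * ∑ i, (q i - ∑ j, x i j) + b * ∑ j, (d j - ∑ i, x i j)
          + ∑ i, ∑ j, ℓ i j * x i j = cost ℓ b h q d) ∧
      ((∑ i, ∑ j, x i j = ∑ j, d j) ∨ (∑ i, ∑ j, x i j = ∑ i, q i)) := by
  classical
  set f : (X → X → ℝ) → ℝ := fun x =>
    h * ∑ i, (q i - ∑ j, x i j) + b * ∑ j, (d j - ∑ i, x i j)
      + ∑ i, ∑ j, ℓ i j * x i j with hfdef
  set S : Set (X → X → ℝ) := {x | (∀ i j, 0 ≤ x i j) ∧
    (∀ i, ∑ j, x i j ≤ q i) ∧ (∀ j, ∑ i, x i j ≤ d j)} with hSdef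
  have hc : ∀ i j, Continuous fun x : X → X → ℝ => x i j := fun i j =>
    (continuous_apply j).comp (continuous_apply i)
  have hcont : Continuous f := by
    apply Continuous.add
    apply Continuous.add
    · exact continuous_const.mul (continuous_finset_sum _ fun i _ =>
        continuous_const.sub (continuous_finset_sum _ fun j _ => hc i j))
    · exact continuous_const.mul (continuous_finset_sum _ fun j _ =>
        continuous_const.sub (continuous_finset_sum _ fun i _ => hc i j))
    · exact continuous_finset_sum _ fun i _ => continuous_finset_sum _ fun j _ =>
        continuous_const.mul (hc i j)
  have hgcont : Continuous fun x : X → X → ℝ => ∑ i, ∑ j, x i j :=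
    continuous_finset_sum _ fun i _ => continuous_finset_sum _ fun j _ => hc i j
  have hSclosed : IsClosed S := by
    have : S = (⋂ i, ⋂ j, {x : X → X → ℝ | 0 ≤ x i j}) ∩
        ((⋂ i, {x : X → X → ℝ | ∑ j, x i j ≤ q i}) ∩
         (⋂ j, {x : X → X → ℝ | ∑ i, x i j ≤ d j})) := by
      ext x
      simp only [hSdef, Set.mem_setOf_eq, Set.mem_inter_iff, Set.mem_iInter]
    rw [this]
    refine IsClosed.inter ?_ (IsClosed.inter ?_ ?_)
    · exact isClosed_iInter fun i => isClosed_iInter fun j =>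
        isClosed_le continuous_const (hc i j)
    · exact isClosed_iInter fun i =>
        isClosed_le (continuous_finset_sum _ fun j _ => hc i j) continuous_const
    · exact isClosed_iInter fun j =>
        isClosed_le (continuous_finset_sum _ fun i _ => hc i j) continuous_const
  have hScompact : IsCompact S := by
    have hK : IsCompact (Set.univ.pi fun i : X => Set.univ.pi fun _ : X =>
        Set.Icc (0 : ℝ) (q i)) :=
      isCompact_univ_pi fun i => isCompact_univ_pi fun _ => isCompact_Icc
    refine hK.of_isClosed_subset hSclosed ?_
    rintro x ⟨hx0, hxr, _⟩
    intro i _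
    intro j _
    refine ⟨hx0 i j, le_trans ?_ (hxr i)⟩
    exact Finset.single_le_sum (fun k _ => hx0 i k) (Finset.mem_univ j)
  have h0S : (fun _ _ => 0 : X → X → ℝ) ∈ S := by
    exact ⟨fun _ _ => le_refl 0, fun i => by simpa using hq i, fun j => by simpa using hd j⟩
  obtain ⟨x₀, hx₀S, hx₀min⟩ := hScompact.exists_isMinOn ⟨_, h0S⟩ hcont.continuousOn
  set S2 : Set (X → X → ℝ) := S ∩ {x | f x = f x₀} with hS2def
  have hS2compact : IsCompact S2 :=
    hScompact.inter_right (isClosed_eq hcont continuous_const)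
  obtain ⟨x, hxS2, hxmax⟩ := hS2compact.exists_isMaxOn ⟨x₀, hx₀S, rfl⟩
    hgcont.continuousOn
  obtain ⟨⟨hx0, hxr, hxc⟩, hxopt⟩ := hxS2
  have hlb : ∀ v ∈ { v | ∃ y : X → X → ℝ, (∀ i j, 0 ≤ y i j) ∧
      (∀ i, ∑ j, y i j ≤ q i) ∧ (∀ j, ∑ i, y i j ≤ d j) ∧
      v = h * ∑ i, (q i - ∑ j, y i j) + b * ∑ j, (d j - ∑ i, y i j)
        + ∑ i, ∑ j, ℓ i j * y i j }, f x ≤ v := by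
    rintro v ⟨y, hy1, hy2, hy3, rfl⟩
    rw [hxopt]
    exact hx₀min (⟨hy1, hy2, hy3⟩ : y ∈ S)
  have hmem : f x ∈ { v | ∃ y : X → X → ℝ, (∀ i j, 0 ≤ y i j) ∧
      (∀ i, ∑ j, y i j ≤ q i) ∧ (∀ j, ∑ i, y i j ≤ d j) ∧
      v = h * ∑ i, (q i - ∑ j, y i j) + b * ∑ j, (d j - ∑ i, y i j)
        + ∑ i, ∑ j, ℓ i j * y i j } := ⟨x, hx0, hxr, hxc, rfl⟩
  have hcost : f x = cost ℓ b h q d := by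
    rw [cost]
    exact le_antisymm (le_csInf ⟨_, hmem⟩ hlb) (csInf_le ⟨f x, hlb⟩ hmem)
  refine ⟨x, hx0, hxr, hxc, hcost, ?_⟩
  by_contra hcon
  push_neg at hcon
  obtain ⟨hnd, hnq⟩ := hcon
  have hled : ∑ i, ∑ j, x i j ≤ ∑ j, d j := by
    rw [Finset.sum_comm]
    exact Finset.sum_le_sum fun j _ => hxc j
  have hleq : ∑ i, ∑ j, x i j ≤ ∑ i, q i :=
    Finset.sum_le_sum fun i _ => hxr i
  have hltd : ∑ i, ∑ j, x i j < ∑ j, d j := lt_of_le_of_ne hled hnd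
  have hltq : ∑ i, ∑ j, x i j < ∑ i, q i := lt_of_le_of_ne hleq hnq
  obtain ⟨i, _, hi⟩ := Finset.exists_lt_of_sum_lt hltq
  have hltd' : ∑ j, ∑ i, x i j < ∑ j, d j := by rwa [Finset.sum_comm]
  obtain ⟨j₀, _, hj⟩ := Finset.exists_lt_of_sum_lt hltd'
  set ε : ℝ := min (q i - ∑ j, x i j) (d j₀ - ∑ i, x i j₀) with hεdef
  have hεpos : 0 < ε := lt_min (by linarith) (by linarith)
  set x' : X → X → ℝ :=
    fun a b => x a b + if a = i then (if b = j₀ then ε else 0) else 0 with hx'def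
  have hrow : ∀ a, ∑ b, x' a b = ∑ b, x a b + if a = i then ε else 0 := by
    intro a
    rw [hx'def]
    simp only [Finset.sum_add_distrib]
    congr 1
    by_cases ha : a = i <;> simp [ha]
  have hcol : ∀ b, ∑ a, x' a b = ∑ a, x a b + if b = j₀ then ε else 0 := by
    intro b
    rw [hx'def]
    simp only [Finset.sum_add_distrib]
    congr 1
    by_cases hb : b = j₀ <;> simp [hb]
  have hx'S : x' ∈ S := by
    refine ⟨fun a c => ?_, fun a => ?_, fun c => ?_⟩
    · have : (0:ℝ) ≤ if a = i then (if c = j₀ then ε else 0) else 0 := by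
        split <;> [skip; rfl]
        split <;> [exact hεpos.le; rfl]
      have := add_le_add (hx0 a c) this
      simpa [hx'def] using this
    · rw [hrow a]
      by_cases ha : a = i
      · subst ha
        have : ε ≤ q a - ∑ j, x a j := min_le_left _ _
        simp only [if_pos rfl, if_true]; linarith
      · simp [ha, hxr a]
    · rw [hcol c]
      by_cases hb : c = j₀
      · subst hb
        have : ε ≤ d c - ∑ i, x i c := min_le_right _ _
        simp only [if_pos rfl, if_true]; linarith
      · simp [hb, hxc c]
  have hsum1 : ∑ a, (q a - ∑ b, x' a b) = (∑ a, (q a - ∑ b, x a b)) - ε := by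
    have key : ∀ a, q a - ∑ b, x' a b = (q a - ∑ b, x a b) - (if a = i then ε else 0) := by
      intro a; rw [hrow a]; ring
    simp only [key, Finset.sum_sub_distrib]
    simp
  have hsum2 : ∑ c, (d c - ∑ a, x' a c) = (∑ c, (d c - ∑ a, x a c)) - ε := by
    have key : ∀ c, d c - ∑ a, x' a c = (d c - ∑ a, x a c) - (if c = j₀ then ε else 0) := by
      intro c; rw [hcol c]; ring
    simp only [key, Finset.sum_sub_distrib]
    simp
  have hsum3 : ∑ a, ∑ c, ℓ a c * x' a c = (∑ a, ∑ c, ℓ a c * x a c) + ℓ i j₀ * ε := by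
    rw [hx'def]
    rw [show ℓ i j₀ * ε = ∑ a, ∑ c, ℓ a c * (if a = i then (if c = j₀ then ε else 0) else 0) by
      rw [Finset.sum_eq_single i]
      · rw [Finset.sum_eq_single j₀]
        · simp
        · intro c _ hc; simp [hc]
        · simp
      · intro a _ ha
        apply Finset.sum_eq_zero
        intro c _; simp [ha]
      · simp]
    rw [← Finset.sum_add_distrib]
    apply Finset.sum_congr rfl
    intro a _
    rw [← Finset.sum_add_distrib]
    apply Finset.sum_congr rfl
    intro c _; ring
  have hfx' : f x' = f x + (ℓ i j₀ - h - b) * ε := by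
    rw [hfdef]
    simp only [hsum1, hsum2, hsum3]
    ring
  have hfle : f x' ≤ f x := by
    have h1 : ℓ i j₀ - h - b ≤ 0 := by have := hub i j₀; linarith
    nlinarith [hεpos.le]
  have hfeq : f x' = f x₀ := le_antisymm (hxopt ▸ hfle) (hx₀min hx'S)
  have hx'S2 : x' ∈ S2 := ⟨hx'S, hfeq⟩
  have hgle := hxmax hx'S2
  have hgx' : ∑ a, ∑ c, x' a c = (∑ a, ∑ c, x a c) + ε := by
    simp only [hrow]
    rw [Finset.sum_add_distrib]
    simp
  simp only [Set.mem_setOf_eq, hgx'] at hgle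
  linarith
end

section
/- For every ν₀ > 0 there exists a constant c > 0, depending only on ν₀, with the following property: for every finite set X, every mean vector μ ∈ ℝ^X with μ_i > 0, every diagonal covariance matrix Σ with diagonal entries σ_i² > 0 satisfying σ_i/μ_i ≤ ν₀ for all i, every nonempty subset S ⊆ X, and every α ≥ 1, there exists a probability distribution D on ℝ_+^S with mean (μ_i)_{i∈S} and covariance matrix Σ_S (the restriction of Σ to S) such that P_{d∼D}( d_i ≥ μ_i + (α/σ_S)·σ_i² for all i ∈ S ) ≥ c/(1+α²), where σ_S = √(Σ_{i∈S} σ_i²). -/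
open MeasureTheory

set_option maxHeartbeats 1600000

/-- for every bound `ν₀` on the coefficient of variation there is a constant
`c > 0` such that for every nonempty `S ⊆ X` and every `α ≥ 1` there is a probability
distribution on `ℝ₊^S` with mean `μ_S` and covariance `Σ_S = diag (σ_i²)_{i ∈ S}` putting
probability at least `c / (1 + α²)` on the event `{d : ∀ i ∈ S, d i ≥ μ i + (α / σ_S) σ_i²}`. -/
theorem stmt2 (ν₀ : ℝ) (hν₀ : 0 < ν₀) :
    ∃ c : ℝ, 0 < c ∧
      ∀ (X : Type) [Fintype X] (μ σ : X → ℝ),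
        (∀ i, 0 < μ i) → (∀ i, 0 < σ i) → (∀ i, σ i / μ i ≤ ν₀) →
        ∀ S : Finset X, S.Nonempty → ∀ α : ℝ, 1 ≤ α →
        ∃ D : Measure ({ i // i ∈ S } → ℝ),
          IsProbabilityMeasure D ∧
          (∀ᵐ d ∂D, ∀ i, 0 ≤ d i) ∧
          (∀ i : { i // i ∈ S }, Integrable (fun d => d i) D ∧ ∫ d, d i ∂D = μ i.1) ∧
          (∀ i j : { i // i ∈ S },
            Integrable (fun d => (d i - μ i.1) * (d j - μ j.1)) D) ∧
          (∀ i : { i // i ∈ S }, ∫ d, (d i - μ i.1) ^ 2 ∂D = (σ i.1) ^ 2) ∧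
          (∀ i j : { i // i ∈ S }, i ≠ j →
            ∫ d, (d i - μ i.1) * (d j - μ j.1) ∂D = 0) ∧
          c / (1 + α ^ 2) ≤
            (D { d | ∀ i : { i // i ∈ S },
                μ i.1 + (α / Real.sqrt (∑ i ∈ S, (σ i) ^ 2)) * (σ i.1) ^ 2 ≤ d i }).toReal := by
  have h1ν : (0:ℝ) < 1 + ν₀ := by linarith
  have h1ν' : (0:ℝ) < 4 * (1 + ν₀) ^ 2 := by nlinarith
  refine ⟨1 / (4 * (1 + ν₀) ^ 2), div_pos one_pos h1ν', ?_⟩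
  intro X _ μ σ hμpos hσpos hcv S hSne α hα
  classical
  set c₀ : ℝ := 1 / (4 * (1 + ν₀) ^ 2) with hc₀def
  have hc₀pos : 0 < c₀ := div_pos one_pos h1ν'
  have hα0 : (0 : ℝ) < α := lt_of_lt_of_le one_pos hα
  have h1α : (0 : ℝ) < 1 + α ^ 2 := by positivity
  set B : ℝ := 1 / (2 * (1 + ν₀)) with hBdef
  have hBpos : 0 < B := div_pos one_pos (by nlinarith)
  have hB : B * (2 * (1 + ν₀)) = 1 := by
    rw [hBdef]; field_simp
  have hc₀sq : c₀ = B ^ 2 := by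
    rw [hc₀def, hBdef, div_pow, one_pow, mul_pow]; norm_num
  have hc₀le : c₀ ≤ 1/4 := by
    rw [hc₀def, div_le_div_iff₀ h1ν' (by norm_num : (0:ℝ) < 4)]
    nlinarith
  set s2 : ℝ := ∑ i ∈ S, (σ i) ^ 2 with hs2def
  have hs2pos : 0 < s2 := Finset.sum_pos (fun i _ => pow_pos (hσpos i) 2) hSne
  set s : ℝ := Real.sqrt s2 with hsdef
  have hspos : 0 < s := Real.sqrt_pos.2 hs2pos
  have hss : s * s = s2 := Real.mul_self_sqrt hs2pos.le
  have hsne : s ≠ 0 := ne_of_gt hspos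
  set p : ℝ := c₀ / (1 + α ^ 2) with hpdef
  have hppos : 0 < p := div_pos hc₀pos h1α
  have hple : p ≤ c₀ := by
    rw [hpdef]; exact div_le_self hc₀pos.le (by nlinarith)
  set r : ℝ := Real.sqrt p with hrdef
  have hrpos : 0 < r := Real.sqrt_pos.2 hppos
  have hrr : r * r = p := Real.mul_self_sqrt hppos.le
  have hc : c₀ = p * (1 + α ^ 2) := by rw [hpdef]; field_simp
  have hαr : α * r ≤ B := by
    have h1 : (α * r) ^ 2 ≤ B ^ 2 := by
      have h2 : (α * r) ^ 2 = α ^ 2 * p := by rw [mul_pow, pow_two r, hrr]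
      rw [h2, ← hc₀sq]
      calc α ^ 2 * p = c₀ * (α ^ 2 / (1 + α ^ 2)) := by rw [hpdef]; ring
        _ ≤ c₀ * 1 := by
            apply mul_le_mul_of_nonneg_left _ hc₀pos.le
            rw [div_le_one h1α]; linarith
        _ = c₀ := mul_one c₀
    have h3 := Real.sqrt_le_sqrt h1
    rwa [Real.sqrt_sq (by positivity), Real.sqrt_sq hBpos.le] at h3
  have hrB : r ≤ B := by
    calc r = 1 * r := (one_mul r).symm
      _ ≤ α * r := mul_le_mul_of_nonneg_right hα hrpos.le
      _ ≤ B := hαr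
  have hrhalf : r ≤ 1/2 := by
    have hB2 : B ≤ 1/2 := by
      rw [hBdef, div_le_div_iff₀ (by nlinarith : (0:ℝ) < 2 * (1 + ν₀)) (by norm_num : (0:ℝ) < 2)]
      nlinarith
    linarith
  have h1r : (0:ℝ) < 1 - r := by linarith
  set t : ℝ := α * r / (1 - r) with htdef
  have htpos : 0 < t := div_pos (mul_pos hα0 hrpos) h1r
  have htb : t * (1 - r) = α * r := by
    rw [htdef]; exact div_mul_cancel₀ _ (ne_of_gt h1r)
  have ht2B : t ≤ 2 * B := by
    have h1 : t * r ≤ t * (1/2) := mul_le_mul_of_nonneg_left hrhalf htpos.le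
    have h2 : t * (1 - r) ≤ B := htb.le.trans hαr
    linarith
  have hνt : ν₀ * t ≤ 1 := by
    have h1 : ν₀ * t ≤ ν₀ * (2 * B) := mul_le_mul_of_nonneg_left ht2B hν₀.le
    have h2 : ν₀ * (2 * B) ≤ 1 := by linarith [hB, hBpos]
    linarith
  -- key algebraic identities
  have hbr1 : p * α + r * α - (1 - p) * t = 0 := by
    linear_combination (-(1 + r)) * htb + (-(α + t)) * hrr
  have hbr2 : p * α ^ 2 + (1 - p) * t ^ 2 - 2 * (r * α) * t = 0 := by
    linear_combination (t * (1 + r) - r * α) * htb - (α ^ 2 - t ^ 2) * hrr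
  clear_value c₀ B s2 s p r t
  -- atoms
  set dA : { i // i ∈ S } → ℝ := fun i => μ i.1 + (α / s) * (σ i.1) ^ 2 with hdAdef
  set dR : { i // i ∈ S } → ℝ := fun i => μ i.1 - (σ i.1) ^ 2 / s * t with hdRdef
  set E0 : ℝ := s / (α * r) with hE0def
  have hE0pos : 0 < E0 := div_pos hspos (mul_pos hα0 hrpos)
  set dK : { i // i ∈ S } → { i // i ∈ S } → ℝ :=
    fun k i => dR i + (if i = k then E0 else 0) with hdKdef
  set τ : { i // i ∈ S } → ℝ := fun k => p * α ^ 2 / s2 * (σ k.1) ^ 2 with hτdef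
  have hτnn : ∀ k, 0 ≤ τ k := fun k => by
    simp only [hτdef]
    have := pow_pos (hσpos k.1) 2
    positivity
  set w : ℝ := 1 - c₀ with hwdef
  have hwnn : 0 ≤ w := by rw [hwdef]; linarith
  have hw1 : w + p * α ^ 2 = 1 - p := by rw [hwdef]; linear_combination (-1 : ℝ) * hc
  have hsum : ∑ k : { i // i ∈ S }, (σ k.1) ^ 2 = s2 := by
    rw [hs2def]; exact Finset.sum_coe_sort S (fun i => (σ i) ^ 2)
  have hτsum : ∑ k : { i // i ∈ S }, τ k = p * α ^ 2 := by
    simp only [hτdef]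
    rw [← Finset.mul_sum, hsum]
    field_simp
  have hτE0 : ∀ k, τ k * E0 = r * α * (σ k.1) ^ 2 / s := by
    intro k
    simp only [hτdef, hE0def]
    rw [← hss, ← hrr]
    field_simp
  have hτE02 : ∀ k, τ k * E0 ^ 2 = (σ k.1) ^ 2 := by
    intro k
    simp only [hτdef, hE0def]
    rw [← hss, ← hrr]
    field_simp
  clear_value dA dR E0 dK τ w
  -- nonnegativity of atoms
  have hσles : ∀ i : { i // i ∈ S }, σ i.1 ≤ s := by
    intro i
    have h1 : (σ i.1) ^ 2 ≤ s2 := by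
      rw [hs2def]
      exact Finset.single_le_sum (f := fun j => (σ j) ^ 2)
        (fun j _ => sq_nonneg (σ j)) i.2
    have h2 := Real.sqrt_le_sqrt h1
    rwa [Real.sqrt_sq (hσpos _).le, ← hsdef] at h2
  have hσμ : ∀ i : { i // i ∈ S }, σ i.1 ≤ ν₀ * μ i.1 := by
    intro i
    have h := hcv i.1
    rw [div_le_iff₀ (hμpos _)] at h
    linarith
  have hdRnn : ∀ i, 0 ≤ dR i := by
    intro i
    simp only [hdRdef]
    have h1 : (σ i.1) ^ 2 / s ≤ σ i.1 := by
      rw [div_le_iff₀ hspos, pow_two]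
      exact mul_le_mul_of_nonneg_left (hσles i) (hσpos i.1).le
    have h2 : (σ i.1) ^ 2 / s * t ≤ σ i.1 * t := mul_le_mul_of_nonneg_right h1 htpos.le
    have h3 : σ i.1 * t ≤ ν₀ * μ i.1 * t := mul_le_mul_of_nonneg_right (hσμ i) htpos.le
    have h4 : μ i.1 * (ν₀ * t) ≤ μ i.1 * 1 := mul_le_mul_of_nonneg_left hνt (hμpos i.1).le
    linarith [h2, h3, h4, mul_one (μ i.1)]
  have hdAnn : ∀ i, 0 ≤ dA i := by
    intro i
    simp only [hdAdef]
    have h1 : 0 < (α / s) * (σ i.1) ^ 2 :=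
      mul_pos (div_pos hα0 hspos) (pow_pos (hσpos _) 2)
    linarith [hμpos i.1]
  have hdKnn : ∀ k i, 0 ≤ dK k i := by
    intro k i
    simp only [hdKdef]
    have h1 : (0:ℝ) ≤ if i = k then E0 else 0 := by
      split
      · exact hE0pos.le
      · exact le_refl 0
    linarith [hdRnn i]
  -- the measure
  set D : Measure ({ i // i ∈ S } → ℝ) :=
    ENNReal.ofReal p • Measure.dirac dA +
      (ENNReal.ofReal w • Measure.dirac dR +
        ∑ k : { i // i ∈ S }, ENNReal.ofReal (τ k) • Measure.dirac (dK k)) with hDdef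
  clear_value D
  -- integration lemma
  have key : ∀ f : ({ i // i ∈ S } → ℝ) → ℝ, Measurable f →
      Integrable f D ∧
        ∫ d, f d ∂D = p * f dA + w * f dR + ∑ k : { i // i ∈ S }, τ k * f (dK k) := by
    intro f hf
    have hdint : ∀ x : { i // i ∈ S } → ℝ, Integrable f (Measure.dirac x) := fun x =>
      (integrable_const (f x)).congr (ae_eq_dirac f).symm
    have h1 : Integrable f (ENNReal.ofReal p • Measure.dirac dA) :=
      (hdint _).smul_measure ENNReal.ofReal_ne_top
    have h2 : Integrable f (ENNReal.ofReal w • Measure.dirac dR) :=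
      (hdint _).smul_measure ENNReal.ofReal_ne_top
    have h3 : Integrable f
        (∑ k : { i // i ∈ S }, ENNReal.ofReal (τ k) • Measure.dirac (dK k)) :=
      integrable_finset_sum_measure.2 fun k _ => (hdint _).smul_measure ENNReal.ofReal_ne_top
    constructor
    · rw [hDdef]
      exact h1.add_measure (h2.add_measure h3)
    rw [hDdef, integral_add_measure h1 (h2.add_measure h3), integral_add_measure h2 h3,
      integral_finset_sum_measure fun k _ => (hdint _).smul_measure ENNReal.ofReal_ne_top]
    simp only [integral_smul_measure, integral_dirac, smul_eq_mul]
    rw [ENNReal.toReal_ofReal hppos.le, ENNReal.toReal_ofReal hwnn, ← add_assoc]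
    congr 1
    exact Finset.sum_congr rfl fun k _ => by rw [ENNReal.toReal_ofReal (hτnn k)]
  -- probability measure
  have hsum1 : p + (w + ∑ k : { i // i ∈ S }, τ k) = 1 := by
    rw [hτsum, hwdef]
    linear_combination -hc
  have hprob : IsProbabilityMeasure D := by
    constructor
    rw [hDdef]
    simp only [Measure.coe_add, Measure.coe_smul, Pi.add_apply, Pi.smul_apply,
      Measure.coe_finset_sum, Finset.sum_apply, measure_univ, smul_eq_mul, mul_one]
    rw [← ENNReal.ofReal_sum_of_nonneg (fun k _ => hτnn k),
      ← ENNReal.ofReal_add hwnn (Finset.sum_nonneg fun k _ => hτnn k),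
      ← ENNReal.ofReal_add hppos.le
        (add_nonneg hwnn (Finset.sum_nonneg fun k _ => hτnn k)),
      hsum1, ENNReal.ofReal_one]
  refine ⟨D, hprob, ?_, ?_, ?_, ?_, ?_, ?_⟩
  · -- a.e. nonneg
    have hN : MeasurableSet {d : { i // i ∈ S } → ℝ | ∀ i, 0 ≤ d i} := by
      rw [Set.setOf_forall]
      exact MeasurableSet.iInter fun i =>
        measurableSet_le measurable_const (measurable_pi_apply i)
    rw [ae_iff]
    have hz : ∀ x : { i // i ∈ S } → ℝ, (∀ i, 0 ≤ x i) →
        Measure.dirac x ({d : { i // i ∈ S } → ℝ | ∀ i, 0 ≤ d i}ᶜ) = 0 := by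
      intro x hx
      rw [Measure.dirac_apply' x hN.compl]
      exact Set.indicator_of_notMem (by simpa using hx) 1
    have hcompl : {d : { i // i ∈ S } → ℝ | ¬ ∀ i, 0 ≤ d i}
        = {d : { i // i ∈ S } → ℝ | ∀ i, 0 ≤ d i}ᶜ := rfl
    rw [hcompl, hDdef]
    simp only [Measure.coe_add, Measure.coe_smul, Pi.add_apply, Pi.smul_apply,
      Measure.coe_finset_sum, Finset.sum_apply, smul_eq_mul]
    rw [hz dA hdAnn, hz dR hdRnn,
      Finset.sum_eq_zero fun k _ => by rw [hz (dK k) (hdKnn k), mul_zero]]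
    simp
  · -- mean
    intro i
    have hf : Measurable fun d : { i // i ∈ S } → ℝ => d i := measurable_pi_apply i
    obtain ⟨hint, hval⟩ := key _ hf
    refine ⟨hint, ?_⟩
    rw [hval]
    have hsplit : ∑ k : { i // i ∈ S }, τ k * dK k i
        = (∑ k : { i // i ∈ S }, τ k) * dR i + τ i * E0 := by
      simp only [hdKdef, mul_add, mul_ite, mul_zero]
      rw [Finset.sum_add_distrib, ← Finset.sum_mul, Finset.sum_ite_eq]
      simp
    rw [hsplit, hτsum, hτE0 i]
    simp only [hdAdef, hdRdef]
    linear_combination (μ i.1 - (σ i.1) ^ 2 / s * t) * hw1 + ((σ i.1) ^ 2 / s) * hbr1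
  · -- integrable products
    intro i j
    exact (key _ (((measurable_pi_apply i).sub measurable_const).mul
      ((measurable_pi_apply j).sub measurable_const))).1
  · -- variance
    intro i
    have hf : Measurable fun d : { i // i ∈ S } → ℝ => (d i - μ i.1) ^ 2 :=
      ((measurable_pi_apply i).sub measurable_const).pow_const 2
    obtain ⟨-, hval⟩ := key _ hf
    rw [hval]
    have hsplit : ∑ k : { i // i ∈ S }, τ k * (dK k i - μ i.1) ^ 2
        = (∑ k : { i // i ∈ S }, τ k) * (dR i - μ i.1) ^ 2
          + τ i * (2 * (dR i - μ i.1) * E0 + E0 ^ 2) := by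
      have hpt : ∀ k, (dK k i - μ i.1) ^ 2
          = (dR i - μ i.1) ^ 2
            + (if i = k then 2 * (dR i - μ i.1) * E0 + E0 ^ 2 else 0) := by
        intro k
        simp only [hdKdef]
        split <;> ring
      rw [Finset.sum_congr rfl fun k _ => by rw [hpt k]]
      simp only [mul_add, mul_ite, mul_zero]
      rw [Finset.sum_add_distrib, ← Finset.sum_mul, Finset.sum_ite_eq]
      simp
    rw [hsplit, hτsum]
    have h2 : τ i * (2 * (dR i - μ i.1) * E0 + E0 ^ 2)
        = 2 * (dR i - μ i.1) * (r * α * (σ i.1) ^ 2 / s) + (σ i.1) ^ 2 := by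
      linear_combination (2 * (dR i - μ i.1)) * hτE0 i + hτE02 i
    rw [h2]
    simp only [hdAdef, hdRdef]
    ring_nf
    linear_combination (((σ i.1) ^ 2) ^ 2 / s ^ 2) * hbr2
      + (t ^ 2 * ((σ i.1) ^ 2) ^ 2 / s ^ 2) * hw1
  · -- zero covariance
    intro i j hij
    have hf : Measurable fun d : { i // i ∈ S } → ℝ => (d i - μ i.1) * (d j - μ j.1) :=
      ((measurable_pi_apply i).sub measurable_const).mul
        ((measurable_pi_apply j).sub measurable_const)
    obtain ⟨-, hval⟩ := key _ hf
    rw [hval]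
    have hsplit : ∑ k : { i // i ∈ S }, τ k * ((dK k i - μ i.1) * (dK k j - μ j.1))
        = (∑ k : { i // i ∈ S }, τ k) * ((dR i - μ i.1) * (dR j - μ j.1))
          + τ i * (E0 * (dR j - μ j.1)) + τ j * ((dR i - μ i.1) * E0) := by
      have hpt : ∀ k, (dK k i - μ i.1) * (dK k j - μ j.1)
          = (dR i - μ i.1) * (dR j - μ j.1)
            + (if i = k then E0 * (dR j - μ j.1) else 0)
            + (if j = k then (dR i - μ i.1) * E0 else 0) := by
        intro k
        simp only [hdKdef]
        split_ifs with h1 h2 h2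
        · exact absurd (h1.trans h2.symm) hij
        · ring
        · ring
        · ring
      rw [Finset.sum_congr rfl fun k _ => by rw [hpt k]]
      simp only [mul_add, mul_ite, mul_zero]
      rw [Finset.sum_add_distrib, Finset.sum_add_distrib, ← Finset.sum_mul,
        Finset.sum_ite_eq, Finset.sum_ite_eq]
      simp [add_assoc]
    rw [hsplit, hτsum]
    have h2 : τ i * (E0 * (dR j - μ j.1)) = r * α * (σ i.1) ^ 2 / s * (dR j - μ j.1) := by
      linear_combination (dR j - μ j.1) * hτE0 i
    have h3 : τ j * ((dR i - μ i.1) * E0)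
        = (dR i - μ i.1) * (r * α * (σ j.1) ^ 2 / s) := by
      linear_combination (dR i - μ i.1) * hτE0 j
    rw [h2, h3]
    simp only [hdAdef, hdRdef]
    ring_nf
    linear_combination ((σ i.1) ^ 2 * (σ j.1) ^ 2 / s ^ 2) * hbr2
      + (t ^ 2 * (σ i.1) ^ 2 * (σ j.1) ^ 2 / s ^ 2) * hw1
  · -- probability bound
    have hmem : dA ∈ { d : { i // i ∈ S } → ℝ | ∀ i,
        μ i.1 + (α / s) * (σ i.1) ^ 2 ≤ d i } := fun i => le_of_eq (by rw [hdAdef])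
    have h1 : ENNReal.ofReal p ≤ D { d : { i // i ∈ S } → ℝ | ∀ i,
        μ i.1 + (α / s) * (σ i.1) ^ 2 ≤ d i } := by
      rw [hDdef]
      simp only [Measure.coe_add, Pi.add_apply]
      calc ENNReal.ofReal p
          = (ENNReal.ofReal p • Measure.dirac dA) { d : { i // i ∈ S } → ℝ | ∀ i,
              μ i.1 + (α / s) * (σ i.1) ^ 2 ≤ d i } := by
            rw [Measure.smul_apply, Measure.dirac_apply_of_mem hmem, smul_eq_mul, mul_one]
        _ ≤ _ := le_self_add
    have hfin : D { d : { i // i ∈ S } → ℝ | ∀ i,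
        μ i.1 + (α / s) * (σ i.1) ^ 2 ≤ d i } ≠ ⊤ := measure_ne_top D _
    calc p = (ENNReal.ofReal p).toReal := (ENNReal.toReal_ofReal hppos.le).symm
      _ ≤ _ := ENNReal.toReal_mono hfin h1
end

section
/- If X is a finite subset of the Euclidean space ℝ^d with at least 2 points, equipped with the Euclidean metric ℓ, then for every α > √d, β = 2^d, and every even integer γ ≥ 2, (X, ℓ) admits an (α,β,γ)-well-separated hierarchical partition. -/
open MeasureTheory

namespace S5
attribute [local instance] Classical.propDecidable
variable {d : ℕ} {X : Finset (EuclideanSpace ℝ (Fin d))}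

lemma myfloor_div (a : ℝ) (n : ℕ) (hn : 0 < n) : ⌊a / (n:ℝ)⌋ = ⌊a⌋ / (n:ℤ) := by
  have hn' : (0:ℤ) < n := by exact_mod_cast hn
  have hnr : (0:ℝ) < n := by exact_mod_cast hn
  rw [Int.floor_eq_iff]
  constructor
  · have h1 : (⌊a⌋ / (n:ℤ)) * n ≤ ⌊a⌋ := Int.ediv_mul_le _ (by omega)
    have h0 := Int.floor_le a
    rw [le_div_iff₀ hnr]
    calc ((⌊a⌋ / (n:ℤ) : ℤ) : ℝ) * n = (((⌊a⌋ / (n:ℤ)) * n : ℤ) : ℝ) := by push_cast; ring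
      _ ≤ (⌊a⌋ : ℝ) := by exact_mod_cast h1
      _ ≤ a := h0
  · have h2 : ⌊a⌋ < (⌊a⌋ / (n:ℤ) + 1) * n := Int.lt_ediv_add_one_mul_self _ hn'
    rw [div_lt_iff₀ hnr]
    calc a < (⌊a⌋ : ℝ) + 1 := Int.lt_floor_add_one a
      _ ≤ (((⌊a⌋ / (n:ℤ) + 1) * n : ℤ) : ℝ) := by exact_mod_cast h2
      _ = ((⌊a⌋ / (n:ℤ) : ℤ) + 1 : ℝ) * n := by push_cast; ring

lemma floor_gap {u v Δ : ℝ} (hΔ : 0 < Δ) (h : ⌊v/Δ⌋ + 2 ≤ ⌊u/Δ⌋) : Δ < u - v := by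
  have h1 : (⌊u/Δ⌋ : ℝ) ≤ u/Δ := Int.floor_le _
  have h2 : v/Δ < ⌊v/Δ⌋ + 1 := Int.lt_floor_add_one _
  have h3 : (⌊v/Δ⌋ : ℝ) + 2 ≤ (⌊u/Δ⌋ : ℝ) := by exact_mod_cast h
  have h4 : 1 < u/Δ - v/Δ := by linarith
  have h5 : u/Δ - v/Δ = (u - v)/Δ := by ring
  rw [h5] at h4
  have := (lt_div_iff₀ hΔ).mp h4
  linarith

lemma floor_close {u v Δ : ℝ} (hΔ : 0 < Δ) (h : ⌊u/Δ⌋ = ⌊v/Δ⌋) : |u - v| < Δ := by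
  have h1 : (⌊u/Δ⌋ : ℝ) ≤ u/Δ := Int.floor_le _
  have h2 : u/Δ < ⌊u/Δ⌋ + 1 := Int.lt_floor_add_one _
  have h3 : (⌊v/Δ⌋ : ℝ) ≤ v/Δ := Int.floor_le _
  have h4 : v/Δ < ⌊v/Δ⌋ + 1 := Int.lt_floor_add_one _
  rw [h] at h1 h2
  have e1 : (⌊v/Δ⌋ : ℝ) * Δ ≤ u := by rw [← le_div_iff₀ hΔ]; exact h1
  have e2 : u < ((⌊v/Δ⌋ : ℝ) + 1) * Δ := by rw [← div_lt_iff₀ hΔ]; exact h2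
  have e3 : (⌊v/Δ⌋ : ℝ) * Δ ≤ v := by rw [← le_div_iff₀ hΔ]; exact h3
  have e4 : v < ((⌊v/Δ⌋ : ℝ) + 1) * Δ := by rw [← div_lt_iff₀ hΔ]; exact h4
  rw [abs_lt]
  constructor <;> nlinarith

lemma coord_le_dist (x y : EuclideanSpace ℝ (Fin d)) (i : Fin d) : |x i - y i| ≤ dist x y := by
  rw [EuclideanSpace.dist_eq, ← Real.sqrt_sq_eq_abs]
  apply Real.sqrt_le_sqrt
  have : (x i - y i)^2 = dist (x i) (y i)^2 := by rw [Real.dist_eq, sq_abs]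
  rw [this]
  exact Finset.single_le_sum (f := fun j => dist (x j) (y j)^2)
    (fun j _ => sq_nonneg _) (Finset.mem_univ i)

lemma dist_le_of_coord {x y : EuclideanSpace ℝ (Fin d)} {c : ℝ} (hc : 0 ≤ c)
    (h : ∀ i, |x i - y i| ≤ c) : dist x y ≤ Real.sqrt d * c := by
  rw [EuclideanSpace.dist_eq]
  have hsum : ∑ i, dist (x i) (y i)^2 ≤ (d : ℝ) * c^2 := by
    calc ∑ i, dist (x i) (y i)^2 ≤ ∑ _i : Fin d, c^2 := by
          refine Finset.sum_le_sum fun i _ => ?_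
          rw [Real.dist_eq]
          exact pow_le_pow_left₀ (abs_nonneg _) (h i) 2
      _ = (d : ℝ) * c^2 := by simp [Finset.card_univ]
  calc Real.sqrt (∑ i, dist (x i) (y i)^2) ≤ Real.sqrt ((d:ℝ) * c^2) := Real.sqrt_le_sqrt hsum
    _ = Real.sqrt d * c := by
        rw [Real.sqrt_mul (Nat.cast_nonneg d), Real.sqrt_sq hc]

noncomputable def idxA (Δ : ℝ) (x : {x // x ∈ X}) : Fin d → ℤ :=
  fun i => ⌊x.1 i / Δ⌋

noncomputable def cluA (Δ : ℝ) (x : {x // x ∈ X}) : Finset {x // x ∈ X} :=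
  Finset.univ.filter fun y => idxA Δ y = idxA Δ x

noncomputable def famA (Δ : ℝ) (p : Fin d → ZMod 2) : Finset (Finset {x // x ∈ X}) :=
  (Finset.univ.filter fun x => (fun i => ((idxA Δ x i : ZMod 2))) = p).image (cluA Δ)

noncomputable def partA (X : Finset (EuclideanSpace ℝ (Fin d))) (Δ : ℝ) :
    Finset (Finset (Finset {x // x ∈ X})) :=
  Finset.univ.image (famA Δ)

lemma mem_cluA {Δ : ℝ} {x y : {x // x ∈ X}} : y ∈ cluA Δ x ↔ idxA Δ y = idxA Δ x := by
  simp [cluA]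

lemma self_mem_cluA {Δ : ℝ} (x : {x // x ∈ X}) : x ∈ cluA Δ x := mem_cluA.2 rfl

lemma cluA_eq {Δ : ℝ} {x y : {x // x ∈ X}} (h : idxA Δ y = idxA Δ x) :
    cluA Δ y = cluA Δ x := by
  ext z; simp [mem_cluA, h]

lemma mem_famA {Δ : ℝ} {p : Fin d → ZMod 2} {C : Finset {x // x ∈ X}} :
    C ∈ famA Δ p ↔ ∃ x : {x // x ∈ X},
      (fun i => ((idxA Δ x i : ZMod 2))) = p ∧ cluA Δ x = C := by
  simp [famA]

lemma mem_partA {Δ : ℝ} {F : Finset (Finset {x // x ∈ X})} :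
    F ∈ partA X Δ ↔ ∃ p : Fin d → ZMod 2, famA Δ p = F := by
  simp [partA]

lemma gap_two {a b : ℤ} (hne : a ≠ b) (hpar : (a : ZMod 2) = (b : ZMod 2)) :
    b + 2 ≤ a ∨ a + 2 ≤ b := by
  have : (2:ℤ) ∣ b - a := by
    exact Int.ModEq.dvd ((ZMod.intCast_eq_intCast_iff a b 2).mp hpar)
  obtain ⟨k, hk⟩ := this
  omega

end S5

section S5Main
attribute [local instance] Classical.propDecidable
variable {T : Type} [Fintype T]

lemma valset_finite (ℓ : T → T → ℝ) (C C' : Finset T) :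
    {v | ∃ i ∈ C, ∃ j ∈ C', v = ℓ i j}.Finite := by
  apply Set.Finite.subset (Set.finite_range fun p : T × T => ℓ p.1 p.2)
  rintro v ⟨i, _, j, _, rfl⟩
  exact ⟨(i, j), rfl⟩

lemma setDist_spec (ℓ : T → T → ℝ) {C C' : Finset T} (hC : C.Nonempty) (hC' : C'.Nonempty) :
    ∃ i ∈ C, ∃ j ∈ C', setDist ℓ C C' = ℓ i j := by
  obtain ⟨i, hi⟩ := hC; obtain ⟨j, hj⟩ := hC'
  have hne : {v | ∃ i ∈ C, ∃ j ∈ C', v = ℓ i j}.Nonempty := ⟨ℓ i j, i, hi, j, hj, rfl⟩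
  have := hne.csInf_mem (valset_finite ℓ C C')
  obtain ⟨a, ha, b, hb, hab⟩ := this
  exact ⟨a, ha, b, hb, hab⟩

lemma fdiam_spec (ℓ : T → T → ℝ) {C : Finset T} (hC : C.Nonempty) :
    ∃ i ∈ C, ∃ j ∈ C, fdiam ℓ C = ℓ i j := by
  obtain ⟨i, hi⟩ := hC
  have hne : {v | ∃ i ∈ C, ∃ j ∈ C, v = ℓ i j}.Nonempty := ⟨ℓ i i, i, hi, i, hi, rfl⟩
  have := hne.csSup_mem (valset_finite ℓ C C)
  obtain ⟨a, ha, b, hb, hab⟩ := this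
  exact ⟨a, ha, b, hb, hab⟩

lemma minD_spec (ℓ : T → T → ℝ) {i j : T} (hij : i ≠ j) :
    ∃ a b : T, a ≠ b ∧ minD ℓ = ℓ a b := by
  have hfin : {v | ∃ i j : T, i ≠ j ∧ v = ℓ i j}.Finite := by
    apply Set.Finite.subset (Set.finite_range fun p : T × T => ℓ p.1 p.2)
    rintro v ⟨i, j, _, rfl⟩
    exact ⟨(i, j), rfl⟩
  have hne : {v | ∃ i j : T, i ≠ j ∧ v = ℓ i j}.Nonempty := ⟨ℓ i j, i, j, hij, rfl⟩
  have := hne.csInf_mem hfin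
  obtain ⟨a, b, hab, h⟩ := this
  exact ⟨a, b, hab, h⟩

end S5Main

namespace S5
attribute [local instance] Classical.propDecidable
variable {d : ℕ} {X : Finset (EuclideanSpace ℝ (Fin d))}

lemma isWSP_partA {Δ α : ℝ} (hΔ : 0 < Δ) (hα : Real.sqrt d < α) :
    IsWSP (fun i j : {x // x ∈ X} => dist i.1 j.1) α (2 ^ d) Δ (partA X Δ) := by
  have hα0 : 0 < α := lt_of_le_of_lt (Real.sqrt_nonneg _) hα
  refine ⟨?_, ?_, ?_, ?_⟩
  · -- cardinality
    have h1 : (partA X Δ).card ≤ (Finset.univ : Finset (Fin d → ZMod 2)).card :=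
      Finset.card_image_le
    have h2 : (Finset.univ : Finset (Fin d → ZMod 2)).card = 2 ^ d := by simp
    have : (partA X Δ).card ≤ 2 ^ d := h2 ▸ h1
    calc ((partA X Δ).card : ℝ) ≤ ((2 ^ d : ℕ) : ℝ) := by exact_mod_cast this
      _ = 2 ^ d := by push_cast; ring
  · -- separation
    rintro F hF C hC C' hC' hne
    obtain ⟨p, rfl⟩ := mem_partA.mp hF
    obtain ⟨x, hxp, rfl⟩ := mem_famA.mp hC
    obtain ⟨y, hyp, rfl⟩ := mem_famA.mp hC'
    have hidx : idxA Δ x ≠ idxA Δ y := fun h => hne (cluA_eq h.symm).symm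
    obtain ⟨i, hi⟩ := Function.ne_iff.mp hidx
    have hpar : ((idxA Δ x i : ZMod 2)) = ((idxA Δ y i : ZMod 2)) := by
      have := congrFun hxp i
      have h2 := congrFun hyp i
      rw [this, h2]
    obtain ⟨a, ha, b, hb, hab⟩ :=
      setDist_spec (fun i j : {x // x ∈ X} => dist i.1 j.1)
        ⟨x, self_mem_cluA x⟩ ⟨y, self_mem_cluA y⟩
    rw [hab]
    have hax : idxA Δ a = idxA Δ x := mem_cluA.mp ha
    have hby : idxA Δ b = idxA Δ y := mem_cluA.mp hb
    have hcoord : Δ < |a.1 i - b.1 i| := by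
      rcases gap_two hi hpar with hg | hg
      · -- idxA Δ y i + 2 ≤ idxA Δ x i : a.1 i - b.1 i > Δ
        have : Δ < a.1 i - b.1 i := by
          apply floor_gap hΔ
          show ⌊b.1 i / Δ⌋ + 2 ≤ ⌊a.1 i / Δ⌋
          have e1 : ⌊a.1 i / Δ⌋ = idxA Δ x i := congrFun hax i
          have e2 : ⌊b.1 i / Δ⌋ = idxA Δ y i := congrFun hby i
          omega
        rw [abs_of_pos (by linarith)]; exact this
      · have : Δ < b.1 i - a.1 i := by
          apply floor_gap hΔ
          show ⌊a.1 i / Δ⌋ + 2 ≤ ⌊b.1 i / Δ⌋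
          have e1 : ⌊a.1 i / Δ⌋ = idxA Δ x i := congrFun hax i
          have e2 : ⌊b.1 i / Δ⌋ = idxA Δ y i := congrFun hby i
          omega
        rw [abs_of_neg (by linarith)]; linarith
    exact lt_of_lt_of_le hcoord (coord_le_dist a.1 b.1 i)
  · -- diameter
    rintro F hF C hC
    obtain ⟨p, rfl⟩ := mem_partA.mp hF
    obtain ⟨x, _, rfl⟩ := mem_famA.mp hC
    obtain ⟨a, ha, b, hb, hab⟩ :=
      fdiam_spec (fun i j : {x // x ∈ X} => dist i.1 j.1) ⟨x, self_mem_cluA x⟩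
    rw [hab]
    have hax : idxA Δ a = idxA Δ x := mem_cluA.mp ha
    have hbx : idxA Δ b = idxA Δ x := mem_cluA.mp hb
    have hcoords : ∀ i, |a.1 i - b.1 i| ≤ Δ := by
      intro i
      have : ⌊a.1 i / Δ⌋ = ⌊b.1 i / Δ⌋ := by
        have e1 : ⌊a.1 i / Δ⌋ = idxA Δ x i := congrFun hax i
        have e2 : ⌊b.1 i / Δ⌋ = idxA Δ x i := congrFun hbx i
        omega
      exact le_of_lt (floor_close hΔ this)
    calc dist a.1 b.1 ≤ Real.sqrt d * Δ := dist_le_of_coord (le_of_lt hΔ) hcoords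
      _ < α * Δ := by exact mul_lt_mul_of_pos_right hα hΔ
  · -- partition
    intro x
    refine ⟨cluA Δ x, ⟨⟨famA Δ (fun i => ((idxA Δ x i : ZMod 2))), mem_partA.mpr ⟨_, rfl⟩,
      mem_famA.mpr ⟨x, rfl, rfl⟩⟩, self_mem_cluA x⟩, ?_⟩
    rintro C ⟨⟨F, hF, hCF⟩, hxC⟩
    obtain ⟨p, rfl⟩ := mem_partA.mp hF
    obtain ⟨y, _, rfl⟩ := mem_famA.mp hCF
    exact cluA_eq (mem_cluA.mp hxC).symm

lemma cluA_subset {Δ : ℝ} (hΔ : 0 < Δ) {γ : ℕ} (hγ : 0 < γ) (x : {x // x ∈ X}) :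
    cluA Δ x ⊆ cluA ((γ:ℝ) * Δ) x := by
  intro y hy
  have h := mem_cluA.mp hy
  apply mem_cluA.mpr
  funext i
  have key : ∀ u : ℝ, ⌊u / ((γ:ℝ) * Δ)⌋ = ⌊u / Δ⌋ / (γ:ℤ) := by
    intro u
    rw [show ((γ:ℝ) * Δ) = Δ * (γ:ℝ) by ring, ← div_div]
    exact myfloor_div _ _ hγ
  show ⌊y.1 i / ((γ:ℝ) * Δ)⌋ = ⌊x.1 i / ((γ:ℝ) * Δ)⌋
  rw [key, key]
  have : ⌊y.1 i / Δ⌋ = ⌊x.1 i / Δ⌋ := congrFun h i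
  rw [this]

end S5

/-- a finite subset of `ℝ^d` with the Euclidean metric admits an
`(α, 2^d, γ)`-well-separated hierarchical partition for every `α > √d` and every
even integer `γ ≥ 2`. -/
theorem stmt5 (d : ℕ) (X : Finset (EuclideanSpace ℝ (Fin d))) (hn : 2 ≤ X.card)
    (α : ℝ) (hα : Real.sqrt d < α) (γ : ℕ) (hγ : 2 ≤ γ) (hγeven : Even γ) :
    ∃ P : ℕ → Finset (Finset (Finset { x // x ∈ X })),
      IsWSHP (fun i j : { x // x ∈ X } => dist i.1 j.1) α (2 ^ d) (γ : ℝ) P := by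
  classical
  set ℓ : { x // x ∈ X } → { x // x ∈ X } → ℝ := fun i j => dist i.1 j.1 with hℓ
  -- delta1 is positive
  obtain ⟨a, haX, b, hbX, hab⟩ := Finset.one_lt_card.mp (lt_of_lt_of_le one_lt_two hn)
  have hij : (⟨a, haX⟩ : {x // x ∈ X}) ≠ ⟨b, hbX⟩ := fun h => hab (congrArg Subtype.val h)
  obtain ⟨a', b', hab', hmin⟩ := minD_spec ℓ hij
  have hminpos : 0 < minD ℓ := by
    rw [hmin]
    exact dist_pos.mpr (fun h => hab' (Subtype.ext h))
  have hα0 : 0 < α := lt_of_le_of_lt (Real.sqrt_nonneg _) hα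
  have hΔ1 : 0 < delta1 ℓ α := by
    have : 0 < max (minD ℓ) (maxD ℓ / (Fintype.card {x // x ∈ X} : ℝ)) :=
      lt_of_lt_of_le hminpos (le_max_left _ _)
    exact mul_pos (by positivity) this
  have hγ0 : (0:ℝ) < (γ:ℝ) := by exact_mod_cast (by omega : 0 < γ)
  refine ⟨fun r => S5.partA X ((γ:ℝ)^r * delta1 ℓ α), ?_, ?_⟩
  · intro r _
    exact S5.isWSP_partA (mul_pos (pow_pos hγ0 r) hΔ1) hα
  · intro r _ F hF C hC
    obtain ⟨p, rfl⟩ := S5.mem_partA.mp hF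
    obtain ⟨x, _, rfl⟩ := S5.mem_famA.mp hC
    refine ⟨S5.famA ((γ:ℝ)^(r+1) * delta1 ℓ α)
        (fun i => ((S5.idxA ((γ:ℝ)^(r+1) * delta1 ℓ α) x i : ZMod 2))),
      S5.mem_partA.mpr ⟨_, rfl⟩,
      S5.cluA ((γ:ℝ)^(r+1) * delta1 ℓ α) x, S5.mem_famA.mpr ⟨x, rfl, rfl⟩, ?_⟩
    have heq : (γ:ℝ)^(r+1) * delta1 ℓ α = (γ:ℝ) * ((γ:ℝ)^r * delta1 ℓ α) := by ring
    rw [heq]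
    exact S5.cluA_subset (mul_pos (pow_pos hγ0 r) hΔ1) (by omega) x
end

section
/- Assume ℓ_{ij} ≤ b+h for all i, j ∈ X, and fix an (α,β,γ)-well-separated hierarchical partition P_1,…,P_R of (X,ℓ). Let q ∈ ℝ^X with q_i ≥ μ_i for all i, and let d ∈ ℝ_+^X. Then: (i) C(q,d) ≥ h·(q_X − d_X) + (b+h)·(d_X − q_X)^+; and (ii) for every r ∈ {1,…,R−1} and every family F of clusters of P_r, C(q,d) ≥ h·(q_X − d_X) + (Δ_r/2)·Σ_{C∈F} (d_C − q̄_C)^+, where for a cluster C of P_r, C̄ = {i ∈ X : there exists j ∈ C with ℓ_{ij} < Δ_r/2} and q̄_C = q_C + Σ_{i∈C̄\C} (q_i − d_i)^+. -/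
open MeasureTheory

/-!
Both bounds are LP weak duality: every potential `y` with `0 ≤ y ≤ b + h` that is `1`-Lipschitz
for `ℓ` gives `C(q, d) ≥ h (q_X - d_X) + Σ_i y_i (d_i - q_i)`. Part (i) takes `y` constant,
`0` or `b + h`. For part (ii) take `y_i = max (0, max_{j ∈ A} (Δ_r / 2 - ℓ i j))`, where `A` is
the union of the clusters of `F` with positive excess `d_C - q̄_C`: `y = Δ_r / 2` on `A`, `y = 0`
outside the hulls `C̄`, and these hulls are disjoint because clusters of one family are more than
`Δ_r` apart, so the dual objective splits into one term per cluster. Below the top level,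
`Δ_r < max ℓ ≤ b + h`, which keeps `y ≤ b + h`.
-/

section LowerBounds

open Finset

variable {X : Type} {ℓ : X → X → ℝ}

theorem IsMetric.nonneg (hℓ : IsMetric ℓ) (i j : X) : 0 ≤ ℓ i j := by
  have := hℓ.triangle i j i
  rw [hℓ.refl, hℓ.symm j i] at this
  linarith

theorem cost_ge_of_potential [Fintype X] {b h : ℝ} {q d y : X → ℝ} (hq : ∀ i, 0 ≤ q i)
    (hd : ∀ i, 0 ≤ d i) (hy : ∀ i, 0 ≤ y i) (hyb : ∀ i, y i ≤ b + h)
    (hlip : ∀ i j, y j ≤ y i + ℓ i j) :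
    h * (∑ i, q i - ∑ i, d i) + ∑ i, y i * (d i - q i) ≤ cost ℓ b h q d := by
  refine le_csInf
    ⟨_, fun _ _ => 0, fun _ _ => le_rfl, by simpa using hq, by simpa using hd, rfl⟩ ?_
  rintro _ ⟨x, hx, hxq, hxd, rfl⟩
  have slack : h * ∑ i, (q i - ∑ j, x i j) + b * ∑ j, (d j - ∑ i, x i j)
        + ∑ i, ∑ j, ℓ i j * x i j - (h * (∑ i, q i - ∑ i, d i) + ∑ i, y i * (d i - q i))
      = ∑ i, y i * (q i - ∑ j, x i j) + ∑ j, (b + h - y j) * (d j - ∑ i, x i j)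
        + ∑ i, ∑ j, (ℓ i j + y i - y j) * x i j := by
    simp only [mul_sub, sub_mul, add_mul, sum_sub_distrib, sum_add_distrib,
      mul_sum]
    linear_combination sum_comm (s := univ) (t := univ) (f := fun j i => h * x i j)
      + sum_comm (s := univ) (t := univ) (f := fun i j => y j * x i j)
  have h₁ : 0 ≤ ∑ i, y i * (q i - ∑ j, x i j) :=
    sum_nonneg fun i _ => mul_nonneg (hy i) (sub_nonneg.2 (hxq i))
  have h₂ : 0 ≤ ∑ j, (b + h - y j) * (d j - ∑ i, x i j) :=
    sum_nonneg fun j _ => mul_nonneg (sub_nonneg.2 (hyb j)) (sub_nonneg.2 (hxd j))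
  have h₃ : 0 ≤ ∑ i, ∑ j, (ℓ i j + y i - y j) * x i j :=
    sum_nonneg fun i _ => sum_nonneg fun j _ => mul_nonneg (by linarith [hlip i j]) (hx i j)
  linarith

theorem cost_ge_overage_underage [Fintype X] (hℓ : IsMetric ℓ) {b h : ℝ} (hbh : 0 ≤ b + h)
    {q d : X → ℝ} (hq : ∀ i, 0 ≤ q i) (hd : ∀ i, 0 ≤ d i) :
    h * (∑ i, q i - ∑ i, d i) + (b + h) * max (∑ i, d i - ∑ i, q i) 0 ≤ cost ℓ b h q d := by
  have const_potential {c : ℝ} (hc : 0 ≤ c) (hcb : c ≤ b + h) :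
      h * (∑ i, q i - ∑ i, d i) + c * (∑ i, d i - ∑ i, q i) ≤ cost ℓ b h q d := by
    have := cost_ge_of_potential hq hd (fun _ => hc) (fun _ => hcb)
      (fun i j => le_add_of_nonneg_right (hℓ.nonneg i j))
    rwa [← mul_sum, sum_sub_distrib] at this
  rcases le_total (∑ i, d i) (∑ i, q i) with hdq | hqd
  · simpa [max_eq_right (sub_nonpos.2 hdq)] using const_potential le_rfl hbh
  · rw [max_eq_left (sub_nonneg.2 hqd)]
    exact const_potential hbh le_rfl

section Potential

noncomputable def bump (ℓ : X → X → ℝ) (Δ : ℝ) (A : Finset X) (i : X) : ℝ :=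
  (insert 0 (A.image fun j => Δ / 2 - ℓ i j)).max' (insert_nonempty _ _)

variable {Δ t : ℝ} {A : Finset X} {i j : X}

theorem bump_le_iff : bump ℓ Δ A i ≤ t ↔ 0 ≤ t ∧ ∀ j ∈ A, Δ / 2 - ℓ i j ≤ t := by
  simp [bump, max'_le_iff]

theorem zero_le_bump : 0 ≤ bump ℓ Δ A i :=
  le_max' _ _ (mem_insert_self _ _)

theorem sub_le_bump (hj : j ∈ A) : Δ / 2 - ℓ i j ≤ bump ℓ Δ A i :=
  le_max' _ _ (mem_insert_of_mem (mem_image_of_mem (fun j => Δ / 2 - ℓ i j) hj))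

theorem bump_le_half [Fintype X] (hℓ : IsMetric ℓ) (hΔ : 0 ≤ Δ) : bump ℓ Δ A i ≤ Δ / 2 :=
  bump_le_iff.2 ⟨by linarith, fun j _ => by linarith [hℓ.nonneg i j]⟩

theorem bump_le_bump_add [Fintype X] (hℓ : IsMetric ℓ) :
    bump ℓ Δ A j ≤ bump ℓ Δ A i + ℓ i j :=
  bump_le_iff.2 ⟨add_nonneg zero_le_bump (hℓ.nonneg i j), fun k hk => by
    linarith [sub_le_bump (ℓ := ℓ) (Δ := Δ) (i := i) hk, hℓ.triangle i j k, hℓ.symm i j]⟩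

theorem bump_of_mem [Fintype X] (hℓ : IsMetric ℓ) (hΔ : 0 ≤ Δ) (hi : i ∈ A) :
    bump ℓ Δ A i = Δ / 2 :=
  (bump_le_half hℓ hΔ).antisymm <| by
    simpa [hℓ.refl] using sub_le_bump (ℓ := ℓ) (Δ := Δ) (i := i) hi

theorem bump_eq_zero (hA : ∀ j ∈ A, Δ / 2 ≤ ℓ i j) : bump ℓ Δ A i = 0 :=
  (bump_le_iff.2 ⟨le_rfl, fun j hj => by linarith [hA j hj]⟩).antisymm zero_le_bump

end Potential

def IsSeparated (ℓ : X → X → ℝ) (Δ : ℝ) (G : Finset (Finset X)) : Prop :=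
  (G : Set (Finset X)).Pairwise fun C C' => ∀ i ∈ C, ∀ j ∈ C', Δ < ℓ i j

theorem IsSeparated.mono {Δ : ℝ} {G G' : Finset (Finset X)} (hG : IsSeparated ℓ Δ G)
    (hG' : G' ⊆ G) : IsSeparated ℓ Δ G' :=
  Set.Pairwise.mono (coe_subset.2 hG') hG

section ClusterHull

variable [Fintype X] {Δ : ℝ}

-- the paper's `C̄`
open Classical in
noncomputable def clusterHull (ℓ : X → X → ℝ) (Δ : ℝ) (C : Finset X) : Finset X :=
  univ.filter fun i => ∃ j ∈ C, ℓ i j < Δ / 2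

noncomputable def qBar [DecidableEq X] (ℓ : X → X → ℝ) (Δ : ℝ) (q d : X → ℝ) (C : Finset X) : ℝ :=
  ∑ i ∈ C, q i + ∑ i ∈ clusterHull ℓ Δ C \ C, max (q i - d i) 0

theorem mem_clusterHull {C : Finset X} {i : X} :
    i ∈ clusterHull ℓ Δ C ↔ ∃ j ∈ C, ℓ i j < Δ / 2 := by
  simp [clusterHull]

theorem subset_clusterHull (hℓ : IsMetric ℓ) (hΔ : 0 < Δ) (C : Finset X) :
    C ⊆ clusterHull ℓ Δ C :=
  fun i hi => mem_clusterHull.2 ⟨i, hi, by rw [hℓ.refl]; linarith⟩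

theorem qBar_eq_add_sum_indicator [DecidableEq X] (q d : X → ℝ) (C : Finset X) :
    qBar ℓ Δ q d C = ∑ i ∈ C, q i +
      ∑ i, Set.indicator {i : X | i ∉ C ∧ ∃ j ∈ C, ℓ i j < Δ / 2}
        (fun i => max (q i - d i) 0) i := by
  classical
  rw [qBar, sum_indicator_eq_sum_filter]
  congr 2
  ext i
  simp [mem_clusterHull, and_comm]

theorem pairwiseDisjoint_clusterHull (hℓ : IsMetric ℓ) {G : Finset (Finset X)}
    (hG : IsSeparated ℓ Δ G) :
    (G : Set (Finset X)).PairwiseDisjoint (clusterHull ℓ Δ) := by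
  intro C hC C' hC' hne
  refine disjoint_left.2 fun i hi hi' => ?_
  obtain ⟨j, hj, hij⟩ := mem_clusterHull.1 hi
  obtain ⟨k, hk, hik⟩ := mem_clusterHull.1 hi'
  linarith [hG hC hC' hne j hj k hk, hℓ.triangle j i k, hℓ.symm i j]

end ClusterHull

section Separated

variable [Fintype X] {b h Δ : ℝ} {q d : X → ℝ} {G : Finset (Finset X)}

theorem neg_mul_max_sub_le_mul_sub {y a : ℝ} (hy : 0 ≤ y) (hya : y ≤ a) (s t : ℝ) :
    -(a * max (s - t) 0) ≤ y * (t - s) := by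
  rcases le_total t s with hts | hst
  · rw [max_eq_left (sub_nonneg.2 hts)]
    nlinarith
  · rw [max_eq_right (sub_nonpos.2 hst)]
    nlinarith

theorem half_mul_sub_qBar_le_sum_clusterHull [DecidableEq X] (hℓ : IsMetric ℓ) (hΔ : 0 < Δ)
    {C : Finset X} (hC : C ∈ G) :
    Δ / 2 * (∑ i ∈ C, d i - qBar ℓ Δ q d C)
      ≤ ∑ i ∈ clusterHull ℓ Δ C, bump ℓ Δ (G.biUnion id) i * (d i - q i) := by
  have on_C : ∑ i ∈ C, bump ℓ Δ (G.biUnion id) i * (d i - q i)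
      = Δ / 2 * (∑ i ∈ C, d i - ∑ i ∈ C, q i) := by
    rw [← sum_sub_distrib, mul_sum]
    exact sum_congr rfl fun i hi => by
      rw [bump_of_mem hℓ hΔ.le (mem_biUnion.2 ⟨C, hC, hi⟩)]
  have off_C : -(Δ / 2 * ∑ i ∈ clusterHull ℓ Δ C \ C, max (q i - d i) 0)
      ≤ ∑ i ∈ clusterHull ℓ Δ C \ C, bump ℓ Δ (G.biUnion id) i * (d i - q i) := by
    rw [mul_sum, ← sum_neg_distrib]
    exact sum_le_sum fun i _ =>
      neg_mul_max_sub_le_mul_sub zero_le_bump (bump_le_half hℓ hΔ.le) _ _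
  rw [← sum_sdiff (subset_clusterHull hℓ hΔ C), on_C, qBar]
  linarith

theorem sum_bump_mul_eq_sum_clusterHull [DecidableEq X] (hℓ : IsMetric ℓ)
    (hG : IsSeparated ℓ Δ G) (f : X → ℝ) :
    ∑ i, bump ℓ Δ (G.biUnion id) i * f i
      = ∑ C ∈ G, ∑ i ∈ clusterHull ℓ Δ C, bump ℓ Δ (G.biUnion id) i * f i := by
  rw [← sum_biUnion (pairwiseDisjoint_clusterHull hℓ hG)]
  refine (sum_subset (subset_univ _) fun i _ hi => ?_).symm
  rw [bump_eq_zero, zero_mul]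
  intro j hj
  obtain ⟨C, hC, hjC⟩ := mem_biUnion.1 hj
  by_contra! hij
  exact hi (mem_biUnion.2 ⟨C, hC, mem_clusterHull.2 ⟨j, hjC, hij⟩⟩)

theorem cost_ge_of_separated [DecidableEq X] (hℓ : IsMetric ℓ) (hΔ : 0 < Δ)
    (hΔb : Δ / 2 ≤ b + h) (hq : ∀ i, 0 ≤ q i) (hd : ∀ i, 0 ≤ d i) (hG : IsSeparated ℓ Δ G) :
    h * (∑ i, q i - ∑ i, d i) + Δ / 2 * ∑ C ∈ G, (∑ i ∈ C, d i - qBar ℓ Δ q d C)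
      ≤ cost ℓ b h q d := by
  have hdual := cost_ge_of_potential (y := bump ℓ Δ (G.biUnion id)) hq hd
    (fun _ => zero_le_bump) (fun _ => (bump_le_half hℓ hΔ.le).trans hΔb)
    (fun _ _ => bump_le_bump_add hℓ)
  have hlocal : Δ / 2 * ∑ C ∈ G, (∑ i ∈ C, d i - qBar ℓ Δ q d C)
      ≤ ∑ i, bump ℓ Δ (G.biUnion id) i * (d i - q i) := by
    rw [mul_sum, sum_bump_mul_eq_sum_clusterHull hℓ hG]
    exact sum_le_sum fun C hC => half_mul_sub_qBar_le_sum_clusterHull hℓ hΔ hC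
  linarith

theorem cost_ge_of_separated_pos [DecidableEq X] (hℓ : IsMetric ℓ) (hΔ : 0 < Δ)
    (hΔb : Δ / 2 ≤ b + h) (hq : ∀ i, 0 ≤ q i) (hd : ∀ i, 0 ≤ d i) (hG : IsSeparated ℓ Δ G) :
    h * (∑ i, q i - ∑ i, d i) + Δ / 2 * ∑ C ∈ G, max (∑ i ∈ C, d i - qBar ℓ Δ q d C) 0
      ≤ cost ℓ b h q d := by
  classical
  have hpos : ∑ C ∈ G, max (∑ i ∈ C, d i - qBar ℓ Δ q d C) 0
      = ∑ C ∈ G with 0 < ∑ i ∈ C, d i - qBar ℓ Δ q d C, (∑ i ∈ C, d i - qBar ℓ Δ q d C) := by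
    rw [sum_filter]
    refine sum_congr rfl fun C _ => ?_
    split_ifs with hC
    · exact max_eq_left hC.le
    · exact max_eq_right (not_lt.1 hC)
  rw [hpos]
  exact cost_ge_of_separated hℓ hΔ hΔb hq hd (hG.mono (filter_subset _ _))

end Separated

section Levels

variable [Fintype X]

theorem finite_offDiag_dists (ℓ : X → X → ℝ) : {v | ∃ i j : X, i ≠ j ∧ v = ℓ i j}.Finite :=
  (Set.finite_range (Function.uncurry ℓ)).subset fun _ ⟨i, j, _, hv⟩ => ⟨(i, j), hv.symm⟩

theorem nonempty_offDiag_dists (ℓ : X → X → ℝ) (hn : 2 ≤ Fintype.card X) :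
    {v | ∃ i j : X, i ≠ j ∧ v = ℓ i j}.Nonempty :=
  have ⟨i, j, hij⟩ := Fintype.exists_pair_of_one_lt_card (α := X) hn
  ⟨ℓ i j, i, j, hij, rfl⟩

theorem minD_pos (hℓ : IsMetric ℓ) (hn : 2 ≤ Fintype.card X) : 0 < minD ℓ := by
  obtain ⟨i, j, hij, hv⟩ := (nonempty_offDiag_dists ℓ hn).csInf_mem (finite_offDiag_dists ℓ)
  rw [minD, hv]
  exact hℓ.pos i j hij

theorem minD_le_maxD (hn : 2 ≤ Fintype.card X) : minD ℓ ≤ maxD ℓ :=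
  csInf_le_csSup (nonempty_offDiag_dists ℓ hn) (finite_offDiag_dists ℓ).bddBelow
    (finite_offDiag_dists ℓ).bddAbove

theorem maxD_le {c : ℝ} (hn : 2 ≤ Fintype.card X) (hc : ∀ i j, ℓ i j ≤ c) : maxD ℓ ≤ c :=
  csSup_le (nonempty_offDiag_dists ℓ hn) fun _ ⟨i, j, _, hv⟩ => hv ▸ hc i j

theorem delta1_pos (hℓ : IsMetric ℓ) (hn : 2 ≤ Fintype.card X) {α : ℝ} (hα : 0 < α) :
    0 < delta1 ℓ α :=
  mul_pos (one_div_pos.2 hα) ((minD_pos hℓ hn).trans_le (le_max_left _ _))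

theorem pow_mul_delta1_lt_maxD {α γ : ℝ} (hδ : 0 < delta1 ℓ α) (hM : 0 < maxD ℓ) (hγ : 1 < γ)
    {r : ℕ} (hr : r + 1 < numLevels ℓ α γ) : γ ^ r * delta1 ℓ α < maxD ℓ := by
  have hr' : (r : ℝ) < Real.log (maxD ℓ / delta1 ℓ α) / Real.log γ :=
    Nat.lt_ceil.1 (by rw [numLevels] at hr; omega)
  rw [← lt_div_iff₀ hδ, Real.pow_lt_iff_lt_log (by linarith) (div_pos hM hδ)]
  exact (lt_div_iff₀ (Real.log_pos hγ)).1 hr'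

theorem setDist_le {C C' : Finset X} {i j : X} (hi : i ∈ C) (hj : j ∈ C') :
    setDist ℓ C C' ≤ ℓ i j := by
  refine csInf_le (Set.Finite.bddBelow ?_) ⟨i, hi, j, hj, rfl⟩
  exact (Set.finite_range (Function.uncurry ℓ)).subset
    fun _ ⟨a, _, c, _, hv⟩ => ⟨(a, c), hv.symm⟩

theorem IsWSP.isSeparated {α β Δ : ℝ} {P : Finset (Finset (Finset X))} (hP : IsWSP ℓ α β Δ P)
    {F : Finset (Finset X)} (hF : F ∈ P) :
    IsSeparated ℓ Δ F :=
  fun _ hC _ hC' hne _ hi _ hj => (hP.2.1 F hF _ hC _ hC' hne).trans_le (setDist_le hi hj)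

end Levels

end LowerBounds

theorem stmt9_general {X : Type} [Fintype X] (hn : 2 ≤ Fintype.card X)
    (ℓ : X → X → ℝ) (hℓ : IsMetric ℓ) (b h : ℝ) (hh : 0 < h) (hbh : h ≤ b)
    (hub : ∀ i j, ℓ i j ≤ b + h)
    (α β γ : ℝ) (hα : 1 ≤ α) (hγ : 1 < γ)
    (P : ℕ → Finset (Finset (Finset X))) (hP : IsWSHP ℓ α β γ P)
    (μ : X → ℝ) (hμ : ∀ i, 0 < μ i)
    (q d : X → ℝ) (hq : ∀ i, μ i ≤ q i) (hd : ∀ i, 0 ≤ d i) :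
    (h * ((∑ i, q i) - ∑ i, d i) + (b + h) * max ((∑ i, d i) - ∑ i, q i) 0
      ≤ cost ℓ b h q d) ∧
    (∀ r, r + 1 < numLevels ℓ α γ → ∀ F ∈ P r,
      h * ((∑ i, q i) - ∑ i, d i) + γ ^ r * delta1 ℓ α / 2 *
        ∑ C ∈ F, max ((∑ i ∈ C, d i) -
          ((∑ i ∈ C, q i) +
            ∑ i, Set.indicator {i : X | i ∉ C ∧ ∃ j ∈ C, ℓ i j < γ ^ r * delta1 ℓ α / 2}
              (fun i => max (q i - d i) 0) i)) 0
      ≤ cost ℓ b h q d) := by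
  classical
  have hq₀ : ∀ i, 0 ≤ q i := fun i => (hμ i).le.trans (hq i)
  refine ⟨cost_ge_overage_underage hℓ (by linarith) hq₀ hd, fun r hr F hF => ?_⟩
  have hδ := delta1_pos hℓ hn (by linarith : (0 : ℝ) < α)
  have hΔ : 0 < γ ^ r * delta1 ℓ α := mul_pos (pow_pos (by linarith) r) hδ
  have hΔb : γ ^ r * delta1 ℓ α < b + h :=
    (pow_mul_delta1_lt_maxD hδ ((minD_pos hℓ hn).trans_le (minD_le_maxD hn)) hγ hr).trans_le
      (maxD_le hn hub)
  simp only [← qBar_eq_add_sum_indicator]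
  exact cost_ge_of_separated_pos hℓ hΔ (by linarith) hq₀ hd
    ((hP.1 r (by omega)).isSeparated hF)

/-- lower bounds on `C(q, d)`.  Part (i): the overage/underage lower bound.
Part (ii): for each level `r` (with `Δ_r = γ ^ r * Δ₁`) and each family `F` of the
`r`-th partition, the cost is at least
`h (q_X - d_X) + (Δ_r / 2) Σ_{C ∈ F} (d_C - q̄_C)⁺`, where
`q̄_C = q_C + Σ_{i ∈ C̄ \ C} (q_i - d_i)⁺` and `C̄ = {i : ∃ j ∈ C, ℓ i j < Δ_r / 2}`. -/
theorem stmt9 {X : Type} [Fintype X] (hn : 2 ≤ Fintype.card X)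
    (ℓ : X → X → ℝ) (hℓ : IsMetric ℓ) (b h : ℝ) (hh : 0 < h) (hbh : h ≤ b)
    (hub : ∀ i j, ℓ i j ≤ b + h)
    (α β γ : ℝ) (hα : 1 ≤ α) (hβ : 1 ≤ β) (hγ : 1 < γ)
    (P : ℕ → Finset (Finset (Finset X))) (hP : IsWSHP ℓ α β γ P)
    (μ : X → ℝ) (hμ : ∀ i, 0 < μ i)
    (q d : X → ℝ) (hq : ∀ i, μ i ≤ q i) (hd : ∀ i, 0 ≤ d i) :
    (h * ((∑ i, q i) - ∑ i, d i) + (b + h) * max ((∑ i, d i) - ∑ i, q i) 0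
      ≤ cost ℓ b h q d) ∧
    (∀ r, r + 1 < numLevels ℓ α γ → ∀ F ∈ P r,
      h * ((∑ i, q i) - ∑ i, d i) + γ ^ r * delta1 ℓ α / 2 *
        ∑ C ∈ F, max ((∑ i ∈ C, d i) -
          ((∑ i ∈ C, q i) +
            ∑ i, Set.indicator {i : X | i ∉ C ∧ ∃ j ∈ C, ℓ i j < γ ^ r * delta1 ℓ α / 2}
              (fun i => max (q i - d i) 0) i)) 0
      ≤ cost ℓ b h q d) :=
  stmt9_general hn ℓ hℓ b h hh hbh hub α β γ hα hγ P hP μ hμ q d hq hd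
end

section
/- For every ν₀ > 0 there exists a constant c > 0, depending only on ν₀, with the following property: for every finite set X, mean vector μ with μ_i > 0 and diagonal covariance Σ with σ_i² > 0 satisfying max_i σ_i/μ_i ≤ ν₀, every pair of subsets S ⊆ T ⊆ X with S nonempty, and every Q ≥ μ_S, there exists a probability distribution D on ℝ_+^T with mean (μ_i)_{i∈T} and covariance Σ_T such that E_{d∼D}[ (d_S − Q)^+ · 1{d_i ≥ μ_i for all i ∈ T} ] ≥ c·( √(σ_S² + (Q − μ_S)²) − (Q − μ_S) ). -/
open MeasureTheory

/-!
Write `d = μ + σ ⊙ z` with `z` standardized. A finitely supported law of `z` with mean `0` and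
identity covariance is obtained, for any weights `w > 0` with `∑ w² ≤ 1` and any `0 < q < 1`,
from an upper atom `z = (1 - q)/q • w` of mass `q²`, a lower atom `z = -w`, and for each
coordinate `k` an atom of mass `(1 - q)² w_k²` at which `z_k` is raised by `1/((1 - q) w_k)`.
Since `z ≥ -w` everywhere, the choice `w_i = σ_i / (2 K σ_B)` on the blocks `B = S, T \ S`
(with `K = max ν₀ 1`) keeps `d` in the orthant. At the upper atom every `d_i ≥ μ_i`, and with
`a = σ_S/(2K)`, `δ = Q - μ_S`, `G = √(σ_S² + δ²)` and `q = a/(a + δ + G)` it has `d_S - Q = G`;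
its contribution `q² G` is at least `(G - δ)/(36 K²)` because `(G - δ)(G + δ) = σ_S²`.
-/

open Finset

section AtomicMeasure

variable {α κ : Type*} [MeasurableSpace α] [Fintype κ]

noncomputable def atomicMeasure (c : κ → ℝ) (v : κ → α) : Measure α :=
  ∑ k, ENNReal.ofReal (c k) • Measure.dirac (v k)

lemma isProbabilityMeasure_atomicMeasure {c : κ → ℝ} (hc : ∀ k, 0 ≤ c k)
    (hc_sum : ∑ k, c k = 1) (v : κ → α) : IsProbabilityMeasure (atomicMeasure c v) := by
  constructor
  simp [atomicMeasure, ← ENNReal.ofReal_sum_of_nonneg fun k _ => hc k, hc_sum]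

variable [MeasurableSingletonClass α]

lemma integrable_atomicMeasure (c : κ → ℝ) (v : κ → α) (f : α → ℝ) :
    Integrable f (atomicMeasure c v) :=
  integrable_finsetSum_measure.2 fun _ _ =>
    (integrable_dirac (by simp)).smul_measure ENNReal.ofReal_ne_top

lemma integral_atomicMeasure {c : κ → ℝ} (hc : ∀ k, 0 ≤ c k) (v : κ → α) (f : α → ℝ) :
    ∫ x, f x ∂(atomicMeasure c v) = ∑ k, c k * f (v k) := by
  rw [atomicMeasure, integral_finsetSum_measure fun _ _ =>
    (integrable_dirac (by simp)).smul_measure ENNReal.ofReal_ne_top]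
  simp [integral_dirac, ENNReal.toReal_ofReal (hc _)]

lemma ae_atomicMeasure {P : α → Prop} (c : κ → ℝ) {v : κ → α} (hv : ∀ k, P (v k)) :
    ∀ᵐ x ∂(atomicMeasure c v), P x := by
  simp [ae_iff, atomicMeasure, Measure.dirac_apply, hv]

lemma mul_le_integral_atomicMeasure {c : κ → ℝ} (hc : ∀ k, 0 ≤ c k) (v : κ → α) {f : α → ℝ}
    (hf : ∀ x, 0 ≤ f x) (k : κ) : c k * f (v k) ≤ ∫ x, f x ∂(atomicMeasure c v) := by
  rw [integral_atomicMeasure hc]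
  exact single_le_sum (f := fun k => c k * f (v k)) (fun k _ => mul_nonneg (hc k) (hf _))
    (mem_univ k)

end AtomicMeasure

theorem memF_atomicMeasure {ι κ : Type} [Fintype ι] [Fintype κ] {μ σ : ι → ℝ} {c : κ → ℝ}
    {z : κ → ι → ℝ} (hc : ∀ k, 0 ≤ c k) (hc_sum : ∑ k, c k = 1)
    (hmean : ∀ i, ∑ k, c k * z k i = 0) (hvar : ∀ i, ∑ k, c k * z k i ^ 2 = 1)
    (hcov : ∀ i j, i ≠ j → ∑ k, c k * (z k i * z k j) = 0)
    (hsupp : ∀ k i, 0 ≤ μ i + σ i * z k i) :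
    memF μ σ (atomicMeasure c fun k i => μ i + σ i * z k i) := by
  refine ⟨isProbabilityMeasure_atomicMeasure hc hc_sum _, ae_atomicMeasure c hsupp,
    fun i => ⟨integrable_atomicMeasure _ _ _, ?_⟩, fun i j => integrable_atomicMeasure _ _ _,
    fun i => ?_, fun i j hij => ?_⟩ <;> rw [integral_atomicMeasure hc]
  · calc ∑ k, c k * (μ i + σ i * z k i) = μ i * ∑ k, c k + σ i * ∑ k, c k * z k i := by
          rw [mul_sum, mul_sum, ← sum_add_distrib]
          exact sum_congr rfl fun k _ => by ring
      _ = μ i := by rw [hc_sum, hmean]; ring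
  · calc ∑ k, c k * (μ i + σ i * z k i - μ i) ^ 2 = σ i ^ 2 * ∑ k, c k * z k i ^ 2 := by
          rw [mul_sum]
          exact sum_congr rfl fun k _ => by ring
      _ = σ i ^ 2 := by rw [hvar, mul_one]
  · calc ∑ k, c k * ((μ i + σ i * z k i - μ i) * (μ j + σ j * z k j - μ j))
          = σ i * σ j * ∑ k, c k * (z k i * z k j) := by
          rw [mul_sum]
          exact sum_congr rfl fun k _ => by ring
      _ = 0 := by rw [hcov i j hij, mul_zero]

section StdLaw

variable {ι : Type*}

noncomputable def stdLawAtom [DecidableEq ι] (w : ι → ℝ) (q : ℝ) : Option (Option ι) → ι → ℝ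
  | none => fun i => (1 - q) / q * w i
  | some none => fun i => -w i
  | some (some k) => fun i => (if i = k then ((1 - q) * w k)⁻¹ else 0) - w i

noncomputable def stdLawWeight [Fintype ι] (w : ι → ℝ) (q : ℝ) : Option (Option ι) → ℝ
  | none => q ^ 2
  | some none => 1 - q ^ 2 - (1 - q) ^ 2 * ∑ i, w i ^ 2
  | some (some k) => (1 - q) ^ 2 * w k ^ 2

variable {w : ι → ℝ} {q : ℝ}

lemma stdLawAtom_none_nonneg [DecidableEq ι] (hw : ∀ i, 0 ≤ w i) (hq₀ : 0 ≤ q) (hq₁ : q ≤ 1)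
    (i : ι) : 0 ≤ stdLawAtom w q none i :=
  mul_nonneg (div_nonneg (sub_nonneg.2 hq₁) hq₀) (hw i)

lemma neg_le_stdLawAtom [DecidableEq ι] (hw : ∀ i, 0 ≤ w i) (hq₀ : 0 ≤ q) (hq₁ : q ≤ 1)
    (i : ι) : ∀ o, -w i ≤ stdLawAtom w q o i
  | none => by linarith [hw i, stdLawAtom_none_nonneg hw hq₀ hq₁ i]
  | some none => le_rfl
  | some (some k) => by
      have : 0 ≤ if i = k then ((1 - q) * w k)⁻¹ else 0 := by
        split_ifs
        exacts [inv_nonneg.2 (mul_nonneg (by linarith) (hw k)), le_rfl]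
      simp only [stdLawAtom]
      linarith

variable [Fintype ι]

lemma stdLawWeight_nonneg (hw : ∑ i, w i ^ 2 ≤ 1) (hq₀ : 0 ≤ q) (hq₁ : q ≤ 1) :
    ∀ o, 0 ≤ stdLawWeight w q o
  | none => sq_nonneg q
  | some none => by
      simp only [stdLawWeight]
      nlinarith [mul_le_mul_of_nonneg_left hw (sq_nonneg (1 - q))]
  | some (some k) => by simp only [stdLawWeight]; positivity

lemma sum_stdLawWeight : ∑ o, stdLawWeight w q o = 1 := by
  simp only [Fintype.sum_option, stdLawWeight, ← mul_sum]
  ring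

variable [DecidableEq ι]

lemma sum_stdLawWeight_mul_stdLawAtom (i : ι) :
    ∑ o, stdLawWeight w q o * stdLawAtom w q o i = 0 := by
  simp only [Fintype.sum_option, stdLawWeight, stdLawAtom, mul_sub, sum_sub_distrib,
    mul_ite, mul_zero, sum_ite_eq, mem_univ, if_true, ← sum_mul, ← mul_sum]
  have h₁ : q ^ 2 * ((1 - q) / q * w i) = (1 - q) * w i * (q * q / q) := by ring
  have h₂ : (1 - q) ^ 2 * w i ^ 2 * ((1 - q) * w i)⁻¹ = (1 - q) * w i := by
    rw [← mul_pow, sq, mul_self_mul_inv]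
  rw [h₁, h₂, mul_self_div_self]
  ring

lemma sum_stdLawWeight_mul_stdLawAtom_sq {i : ι} (hwi : w i ≠ 0) (hq₀ : q ≠ 0) (hq₁ : q ≠ 1) :
    ∑ o, stdLawWeight w q o * stdLawAtom w q o i ^ 2 = 1 := by
  have : 1 - q ≠ 0 := sub_ne_zero.2 hq₁.symm
  simp only [Fintype.sum_option, stdLawWeight, stdLawAtom, sub_sq, ite_pow, ne_eq,
    OfNat.ofNat_ne_zero, not_false_eq_true, zero_pow, mul_add, mul_sub, mul_ite, ite_mul,
    mul_zero, zero_mul, sum_add_distrib, sum_sub_distrib, sum_ite_eq, mem_univ, if_true,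
    ← sum_mul, ← mul_sum]
  field_simp
  ring

lemma sum_stdLawWeight_mul_stdLawAtom_mul (hq₀ : q ≠ 0) {i j : ι} (hij : i ≠ j) :
    ∑ o, stdLawWeight w q o * (stdLawAtom w q o i * stdLawAtom w q o j) = 0 := by
  simp only [Fintype.sum_option, stdLawWeight, stdLawAtom, sub_mul, mul_sub, mul_ite, ite_mul,
    mul_zero, zero_mul, sum_sub_distrib, sum_ite_eq, mem_univ, if_true, if_neg hij,
    ← sum_mul, ← mul_sum]
  field_simp
  ring

noncomputable def stdLawMeasure (μ σ w : ι → ℝ) (q : ℝ) : Measure (ι → ℝ) :=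
  atomicMeasure (stdLawWeight w q) fun o i => μ i + σ i * stdLawAtom w q o i

lemma sq_mul_le_integral_stdLawMeasure {μ σ : ι → ℝ} (hw : ∑ i, w i ^ 2 ≤ 1) (hq₀ : 0 ≤ q)
    (hq₁ : q ≤ 1) {f : (ι → ℝ) → ℝ} (hf : ∀ x, 0 ≤ f x) :
    q ^ 2 * f (fun i => μ i + σ i * stdLawAtom w q none i) ≤ ∫ x, f x ∂stdLawMeasure μ σ w q :=
  mul_le_integral_atomicMeasure (stdLawWeight_nonneg hw hq₀ hq₁)
    (fun o i => μ i + σ i * stdLawAtom w q o i) hf none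

end StdLaw

theorem memF_stdLawMeasure {ι : Type} [Fintype ι] [DecidableEq ι] {μ σ w : ι → ℝ} {q : ℝ}
    (hσ : ∀ i, 0 ≤ σ i) (hw : ∀ i, 0 < w i) (hw_sq : ∑ i, w i ^ 2 ≤ 1)
    (hwμ : ∀ i, σ i * w i ≤ μ i) (hq₀ : 0 < q) (hq₁ : q < 1) :
    memF μ σ (stdLawMeasure μ σ w q) :=
  memF_atomicMeasure (stdLawWeight_nonneg hw_sq hq₀.le hq₁.le) sum_stdLawWeight
    sum_stdLawWeight_mul_stdLawAtom
    (fun i => sum_stdLawWeight_mul_stdLawAtom_sq (hw i).ne' hq₀.ne' hq₁.ne)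
    (fun i j => sum_stdLawWeight_mul_stdLawAtom_mul hq₀.ne') fun o i => by
      have := mul_le_mul_of_nonneg_left
        (neg_le_stdLawAtom (fun i => (hw i).le) hq₀.le hq₁.le i o) (hσ i)
      linarith [hwμ i]

lemma sum_subtype_ite_mem {X M : Type*} [AddCommMonoid M] [DecidableEq X] {S T : Finset X}
    (hST : S ⊆ T) (f : X → M) : ∑ i : T, (if i.1 ∈ S then f i else 0) = ∑ i ∈ S, f i := by
  rw [sum_coe_sort T fun i => if i ∈ S then f i else 0, sum_ite_mem, inter_eq_right.2 hST]

section BlockWeight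

variable {X : Type} (σ : X → ℝ)

lemma sq_sigC (B : Finset X) : sigC σ B ^ 2 = ∑ i ∈ B, σ i ^ 2 :=
  Real.sq_sqrt (sum_nonneg fun i _ => sq_nonneg (σ i))

lemma abs_le_sigC {B : Finset X} {i : X} (hi : i ∈ B) : |σ i| ≤ sigC σ B :=
  Real.abs_le_sqrt (single_le_sum (fun j _ => sq_nonneg (σ j)) hi)

lemma sigC_pos {B : Finset X} (hσ : ∀ i ∈ B, σ i ≠ 0) (hB : B.Nonempty) : 0 < sigC σ B :=
  Real.sqrt_pos.2 (sum_pos (fun i hi => sq_pos_of_ne_zero (hσ i hi)) hB)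

lemma sum_sq_div_sigC_le_one (B : Finset X) : ∑ i ∈ B, (σ i / sigC σ B) ^ 2 ≤ 1 := by
  simp only [div_pow, ← sum_div, ← sq_sigC]
  exact div_self_le_one _

variable [DecidableEq X] (K : ℝ) (S T : Finset X)

noncomputable def blockWeight (x : X) : ℝ :=
  σ x / sigC σ (if x ∈ S then S else T \ S) / (2 * K)

variable {σ K S T}

lemma mem_ite_sdiff {x : X} (hx : x ∈ T) : x ∈ if x ∈ S then S else T \ S := by
  split_ifs with h
  exacts [h, mem_sdiff.2 ⟨hx, h⟩]

lemma blockWeight_pos (hσ : ∀ i, 0 < σ i) (hK : 0 < K) {x : X} (hx : x ∈ T) :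
    0 < blockWeight σ K S T x :=
  div_pos (div_pos (hσ x) (sigC_pos σ (fun i _ => (hσ i).ne') ⟨x, mem_ite_sdiff hx⟩))
    (by positivity)

lemma mul_blockWeight_le {μ : X → ℝ} (hσ : ∀ i, 0 < σ i) (hK : 0 < K)
    (hσμ : ∀ i, σ i ≤ K * μ i) {x : X} (hx : x ∈ T) :
    σ x * blockWeight σ K S T x ≤ μ x := by
  have hle : σ x / sigC σ (if x ∈ S then S else T \ S) ≤ 1 :=
    div_le_one_of_le₀ ((le_abs_self _).trans (abs_le_sigC σ (mem_ite_sdiff hx)))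
      (Real.sqrt_nonneg _)
  have hμ : 0 < μ x := pos_of_mul_pos_right ((hσ x).trans_le (hσμ x)) hK.le
  calc σ x * blockWeight σ K S T x
      ≤ σ x * (1 / (2 * K)) := by
        unfold blockWeight
        gcongr
        exact (hσ x).le
    _ ≤ K * μ x * (1 / (2 * K)) := by gcongr; exact hσμ x
    _ ≤ μ x := by field_simp; linarith

lemma sum_sq_blockWeight_le (hK : 1 ≤ K) (hST : S ⊆ T) :
    ∑ i ∈ T, blockWeight σ K S T i ^ 2 ≤ 1 := by
  have hS : ∑ i ∈ S, blockWeight σ K S T i ^ 2 = (∑ i ∈ S, (σ i / sigC σ S) ^ 2) / (2 * K) ^ 2 := by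
    rw [sum_div]
    refine sum_congr rfl fun i hi => ?_
    rw [blockWeight, if_pos hi, div_pow]
  have hT : ∑ i ∈ T \ S, blockWeight σ K S T i ^ 2
      = (∑ i ∈ T \ S, (σ i / sigC σ (T \ S)) ^ 2) / (2 * K) ^ 2 := by
    rw [sum_div]
    refine sum_congr rfl fun i hi => ?_
    rw [blockWeight, if_neg (mem_sdiff.1 hi).2, div_pow]
  rw [← sum_sdiff hST, hS, hT, ← add_div, div_le_one (by positivity)]
  nlinarith [sum_sq_div_sigC_le_one σ S, sum_sq_div_sigC_le_one σ (T \ S)]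

lemma sum_mul_blockWeight :
    ∑ i ∈ S, σ i * blockWeight σ K S T i = sigC σ S / (2 * K) :=
  calc ∑ i ∈ S, σ i * blockWeight σ K S T i = (∑ i ∈ S, σ i ^ 2) / sigC σ S / (2 * K) := by
        rw [sum_div, sum_div]
        refine sum_congr rfl fun i hi => ?_
        rw [blockWeight, if_pos hi]
        ring
    _ = sigC σ S / (2 * K) := by rw [← sq_sigC, sq, mul_self_div_self]

lemma sum_ite_mem_add_mul_blockWeight (hST : S ⊆ T) (μ : X → ℝ) (t : ℝ) :
    ∑ i : T, (if i.1 ∈ S then μ i + σ i * (t * blockWeight σ K S T i) else 0) =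
      ∑ i ∈ S, μ i + t * (sigC σ S / (2 * K)) := by
  rw [sum_subtype_ite_mem hST fun i => μ i + σ i * (t * blockWeight σ K S T i), sum_add_distrib,
    ← sum_mul_blockWeight, mul_sum]
  congr 1
  exact sum_congr rfl fun i _ => by ring

end BlockWeight

lemma exists_odds_mul_eq_add_sqrt {s δ K : ℝ} (hs : 0 < s) (hδ : 0 ≤ δ) (hK : 1 ≤ K) :
    ∃ q, 0 < q ∧ q < 1 ∧ (1 - q) / q * (s / (2 * K)) = δ + √(s ^ 2 + δ ^ 2) ∧
      1 / (36 * K ^ 2) * (√(s ^ 2 + δ ^ 2) - δ) ≤ q ^ 2 * √(s ^ 2 + δ ^ 2) := by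
  set G := √(s ^ 2 + δ ^ 2)
  set a := s / (2 * K)
  have hG2 : G ^ 2 = s ^ 2 + δ ^ 2 := Real.sq_sqrt (by positivity)
  have hsG : s ≤ G := Real.le_sqrt_of_sq_le (by nlinarith)
  have hδG : δ ≤ G := Real.le_sqrt_of_sq_le (by nlinarith)
  have ha : 0 < a := by positivity
  have has : a ≤ s := div_le_self hs.le (by linarith)
  have hG : 0 < G := hs.trans_le hsG
  have hq : a / (3 * G) ≤ a / (a + (δ + G)) :=
    div_le_div_of_nonneg_left ha.le (by positivity) (by linarith)
  refine ⟨a / (a + (δ + G)), by positivity, (div_lt_one (by positivity)).2 (by linarith),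
    by field_simp; ring, ?_⟩
  calc 1 / (36 * K ^ 2) * (G - δ) ≤ 1 / (36 * K ^ 2) * ((G - δ) * (G + δ) / G) := by
        gcongr
        rw [le_div_iff₀ hG]
        nlinarith
    _ = (a / (3 * G)) ^ 2 * G := by
        have hK0 : K ≠ 0 := by positivity
        simp only [a]
        field_simp
        linear_combination 36 * hG2
    _ ≤ (a / (a + (δ + G))) ^ 2 * G := by gcongr

theorem stmt10_general (ν₀ : ℝ) :
    ∃ c : ℝ, 0 < c ∧
      ∀ (X : Type) [Fintype X] [DecidableEq X] (μ σ : X → ℝ),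
        (∀ i, 0 < μ i) → (∀ i, 0 < σ i) → (∀ i, σ i / μ i ≤ ν₀) →
        ∀ S T : Finset X, S ⊆ T → S.Nonempty → ∀ Q : ℝ, (∑ i ∈ S, μ i) ≤ Q →
        ∃ D : Measure ({ i // i ∈ T } → ℝ),
          IsProbabilityMeasure D ∧
          (∀ᵐ d ∂D, ∀ i, 0 ≤ d i) ∧
          (∀ i : { i // i ∈ T }, Integrable (fun d => d i) D ∧ ∫ d, d i ∂D = μ i.1) ∧
          (∀ i j : { i // i ∈ T },
            Integrable (fun d => (d i - μ i.1) * (d j - μ j.1)) D) ∧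
          (∀ i : { i // i ∈ T }, ∫ d, (d i - μ i.1) ^ 2 ∂D = (σ i.1) ^ 2) ∧
          (∀ i j : { i // i ∈ T }, i ≠ j →
            ∫ d, (d i - μ i.1) * (d j - μ j.1) ∂D = 0) ∧
          Integrable (fun d : { i // i ∈ T } → ℝ =>
            max ((∑ i : { i // i ∈ T }, if i.1 ∈ S then d i else 0) - Q) 0 *
              Set.indicator {d : { i // i ∈ T } → ℝ | ∀ i, μ i.1 ≤ d i}
                (fun _ => (1 : ℝ)) d) D ∧
          c * (Real.sqrt ((∑ i ∈ S, (σ i) ^ 2) + (Q - ∑ i ∈ S, μ i) ^ 2)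
                - (Q - ∑ i ∈ S, μ i)) ≤
            ∫ d, max ((∑ i : { i // i ∈ T }, if i.1 ∈ S then d i else 0) - Q) 0 *
              Set.indicator {d : { i // i ∈ T } → ℝ | ∀ i, μ i.1 ≤ d i}
                (fun _ => (1 : ℝ)) d ∂D := by
  refine ⟨1 / (36 * max ν₀ 1 ^ 2), by positivity, ?_⟩
  intro X _ _ μ σ hμ hσ hν S T hST hS Q hQ
  set K := max ν₀ 1
  have hK : 1 ≤ K := le_max_right _ _
  have hσμ : ∀ i, σ i ≤ K * μ i := fun i => (div_le_iff₀ (hμ i)).1 ((hν i).trans (le_max_left _ _))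
  obtain ⟨q, hq₀, hq₁, hq_odds, hq_bound⟩ :=
    exists_odds_mul_eq_add_sqrt (sigC_pos σ (fun i _ => (hσ i).ne') hS) (sub_nonneg.2 hQ) hK
  set w : T → ℝ := fun i => blockWeight σ K S T i
  have hw : ∀ i, 0 < w i := fun i => blockWeight_pos hσ (by linarith) i.2
  have hw_sq : ∑ i, w i ^ 2 ≤ 1 := by
    rw [sum_coe_sort T fun i => blockWeight σ K S T i ^ 2]
    exact sum_sq_blockWeight_le hK hST
  obtain ⟨hD, hD_nonneg, hD_mean, hD_int, hD_var, hD_cov⟩ :=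
    memF_stdLawMeasure (μ := fun i : T => μ i) (σ := fun i : T => σ i) (fun i => (hσ i).le) hw
      hw_sq (fun i => mul_blockWeight_le hσ (by linarith) hσμ i.2) hq₀ hq₁
  refine ⟨_, hD, hD_nonneg, hD_mean, hD_int, hD_var, hD_cov, integrable_atomicMeasure _ _ _, ?_⟩
  refine le_trans ?_ (sq_mul_le_integral_stdLawMeasure hw_sq hq₀.le hq₁.le
    fun d => mul_nonneg (le_max_right _ _) (Set.indicator_nonneg (fun _ _ => zero_le_one) d))
  have h_upper : (fun i : T => μ i + σ i * stdLawAtom w q none i) ∈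
      {d : T → ℝ | ∀ i, μ i.1 ≤ d i} := fun i =>
    le_add_of_nonneg_right (mul_nonneg (hσ i).le
      (stdLawAtom_none_nonneg (fun i => (hw i).le) hq₀.le hq₁.le i))
  rw [Set.indicator_of_mem h_upper, mul_one]
  simp only [stdLawAtom, w]
  rw [sum_ite_mem_add_mul_blockWeight hST, hq_odds, ← sq_sigC,
    show ∀ m G : ℝ, m + (Q - m + G) - Q = G by intros; ring, max_eq_left (Real.sqrt_nonneg _)]
  exact hq_bound

/-- for every bound `ν₀` on the coefficient of variation there is a constant
`c > 0` such that for all `S ⊆ T ⊆ X` with `S` nonempty and every `Q ≥ μ_S` there is a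
probability distribution `D` on `ℝ₊^T` with mean `μ_T` and covariance `Σ_T` with
`E_{d ∼ D}[(d_S - Q)⁺ · 1{d_i ≥ μ_i ∀ i ∈ T}] ≥ c (√(σ_S² + (Q - μ_S)²) - (Q - μ_S))`. -/
theorem stmt10 (ν₀ : ℝ) (hν₀ : 0 < ν₀) :
    ∃ c : ℝ, 0 < c ∧
      ∀ (X : Type) [Fintype X] [DecidableEq X] (μ σ : X → ℝ),
        (∀ i, 0 < μ i) → (∀ i, 0 < σ i) → (∀ i, σ i / μ i ≤ ν₀) →
        ∀ S T : Finset X, S ⊆ T → S.Nonempty → ∀ Q : ℝ, (∑ i ∈ S, μ i) ≤ Q →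
        ∃ D : Measure ({ i // i ∈ T } → ℝ),
          IsProbabilityMeasure D ∧
          (∀ᵐ d ∂D, ∀ i, 0 ≤ d i) ∧
          (∀ i : { i // i ∈ T }, Integrable (fun d => d i) D ∧ ∫ d, d i ∂D = μ i.1) ∧
          (∀ i j : { i // i ∈ T },
            Integrable (fun d => (d i - μ i.1) * (d j - μ j.1)) D) ∧
          (∀ i : { i // i ∈ T }, ∫ d, (d i - μ i.1) ^ 2 ∂D = (σ i.1) ^ 2) ∧
          (∀ i j : { i // i ∈ T }, i ≠ j →
            ∫ d, (d i - μ i.1) * (d j - μ j.1) ∂D = 0) ∧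
          Integrable (fun d : { i // i ∈ T } → ℝ =>
            max ((∑ i : { i // i ∈ T }, if i.1 ∈ S then d i else 0) - Q) 0 *
              Set.indicator {d : { i // i ∈ T } → ℝ | ∀ i, μ i.1 ≤ d i}
                (fun _ => (1 : ℝ)) d) D ∧
          c * (Real.sqrt ((∑ i ∈ S, (σ i) ^ 2) + (Q - ∑ i ∈ S, μ i) ^ 2)
                - (Q - ∑ i ∈ S, μ i)) ≤
            ∫ d, max ((∑ i : { i // i ∈ T }, if i.1 ∈ S then d i else 0) - Q) 0 *
              Set.indicator {d : { i // i ∈ T } → ℝ | ∀ i, μ i.1 ≤ d i}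
                (fun _ => (1 : ℝ)) d ∂D :=
  stmt10_general ν₀
end
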